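/- arXiv:2509.06280 — 6 statements merged into one kernel-verified Lean document; each statement's English description precedes it below -/
import Mathlib

section
/- Let ℓ ≥ 3 be an integer with ℓ ≠ 5, and let C be the cycle graph on ℓ vertices. Then for every list assignment L of C with |L(v)| ≥ 4 for every vertex v (note every vertex of C has degree 2, so 4 = degree + 2), C admits a proper conflict-free L-coloring. In other words, every cycle of length ℓ ≠ 5 is proper conflict-free (degree+2)-choosable. -/
/-- `φ` is a proper conflict-free coloring of `G`: it is a proper coloring and every
non-isolated vertex `v` has some color appearing on exactly one neighbor of `v`. -/
def IsPCFColoring {V : Type*} (G : SimpleGraph V) (φ : V → ℕ) : Prop :=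
  (∀ ⦃a b : V⦄, G.Adj a b → φ a ≠ φ b) ∧
  ∀ v : V, (G.neighborSet v).Nonempty →
    ∃ c : ℕ, ∃! w : V, w ∈ G.neighborSet v ∧ φ w = c

noncomputable def pcfPick (s : Finset ℕ) : ℕ := if h : s.Nonempty then h.choose else 0

lemma pcfPick_mem {s : Finset ℕ} (h : s.Nonempty) : pcfPick s ∈ s := by
  rw [pcfPick, dif_pos h]; exact h.choose_spec

lemma pcf_sdiff_nonempty {s t : Finset ℕ} (h : t.card < s.card) : (s \ t).Nonempty := by
  rw [← Finset.card_pos]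
  have := Finset.le_card_sdiff t s
  omega

noncomputable def pcfGreedy (A : ℕ → Finset ℕ) : ℕ → ℕ
  | 0 => pcfPick (A 0)
  | 1 => pcfPick (A 1 \ {pcfGreedy A 0, pcfGreedy A 0})
  | n + 2 => pcfPick (A (n + 2) \ {pcfGreedy A (n + 1), pcfGreedy A n})

lemma pcf_pair_card (x y : ℕ) : ({x, y} : Finset ℕ).card ≤ 2 :=
  le_trans (Finset.card_insert_le _ _) (by simp)

lemma pcfGreedy_spec (A : ℕ → Finset ℕ) (n : ℕ) (h1 : 1 ≤ n) (h3 : 3 ≤ (A n).card) :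
    pcfGreedy A n ∈ A n ∧ pcfGreedy A n ≠ pcfGreedy A (n - 1) ∧
      pcfGreedy A n ≠ pcfGreedy A (n - 2) := by
  match n, h1 with
  | 1, _ =>
    have hne : (A 1 \ {pcfGreedy A 0, pcfGreedy A 0}).Nonempty :=
      pcf_sdiff_nonempty (lt_of_le_of_lt (pcf_pair_card _ _) (by omega))
    have hm := pcfPick_mem hne
    rw [Finset.mem_sdiff, Finset.mem_insert, Finset.mem_singleton] at hm
    have he : pcfGreedy A 1 = pcfPick (A 1 \ {pcfGreedy A 0, pcfGreedy A 0}) := by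
      simp [pcfGreedy]
    rw [he]
    exact ⟨hm.1, fun h => hm.2 (Or.inl h), fun h => hm.2 (Or.inl h)⟩
  | (n + 2), _ =>
    have hne : (A (n + 2) \ {pcfGreedy A (n + 1), pcfGreedy A n}).Nonempty :=
      pcf_sdiff_nonempty (lt_of_le_of_lt (pcf_pair_card _ _) (by omega))
    have hm := pcfPick_mem hne
    rw [Finset.mem_sdiff, Finset.mem_insert, Finset.mem_singleton] at hm
    have he : pcfGreedy A (n + 2) =
        pcfPick (A (n + 2) \ {pcfGreedy A (n + 1), pcfGreedy A n}) := by
      simp [pcfGreedy]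
    rw [he]
    exact ⟨hm.1, fun h => hm.2 (Or.inl h), fun h => hm.2 (Or.inr h)⟩

lemma pcf_mod1 (ℓ i : ℕ) (h2 : 2 ≤ ℓ) (hi : i < ℓ) :
    (i + 1) % ℓ = if i + 1 = ℓ then 0 else i + 1 := by
  split_ifs with h
  · rw [h, Nat.mod_self]
  · exact Nat.mod_eq_of_lt (by omega)

lemma pcf_mod2 (ℓ i : ℕ) (h2 : 2 ≤ ℓ) (hi : i < ℓ) :
    (i + 2) % ℓ = if i + 2 = ℓ then 0 else if i + 1 = ℓ then 1 else i + 2 := by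
  split_ifs with h h'
  · rw [h, Nat.mod_self]
  · rw [show i + 2 = 1 + ℓ by omega, Nat.add_mod_right]
    exact Nat.mod_eq_of_lt (by omega)
  · exact Nat.mod_eq_of_lt (by omega)

/-- The greedy case: if some color of `L 0` is missing from `L (ℓ-1)`, a greedy
coloring of the cycle-square succeeds. -/
lemma pcf_greedy_case (ℓ : ℕ) (hℓ : 3 ≤ ℓ) (L : ℕ → Finset ℕ)
    (hL : ∀ i, i < ℓ → 4 ≤ (L i).card) (c0 : ℕ) (hc0 : c0 ∈ L 0) (hc0' : c0 ∉ L (ℓ - 1)) :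
    ∃ c : ℕ → ℕ, ∀ i, i < ℓ →
      c i ∈ L i ∧ c i ≠ c ((i + 1) % ℓ) ∧ c i ≠ c ((i + 2) % ℓ) := by
  classical
  set A : ℕ → Finset ℕ :=
    fun m => if m = 0 then {c0} else if m = ℓ - 2 then L (ℓ - 2) \ {c0} else L m with hA
  set g : ℕ → ℕ := pcfGreedy A with hg
  have hA0 : A 0 = {c0} := by simp [hA]
  have hg0 : g 0 = c0 := by
    have h2 : pcfPick (A 0) ∈ A 0 := pcfPick_mem (by rw [hA0]; exact ⟨c0, by simp⟩)
    rw [hA0, Finset.mem_singleton] at h2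
    have he : g 0 = pcfPick (A 0) := by simp [hg, pcfGreedy]
    rw [he, hA0, h2]
  have hAcard : ∀ m, 1 ≤ m → m < ℓ → 3 ≤ (A m).card := by
    intro m h1 h2
    simp only [hA]
    rw [if_neg (by omega)]
    split_ifs with h
    · have h4 := hL (ℓ - 2) (by omega)
      have hsub := Finset.le_card_sdiff ({c0} : Finset ℕ) (L (ℓ - 2))
      simp only [Finset.card_singleton] at hsub
      omega
    · have := hL m h2; omega
  have hAsub : ∀ m, 1 ≤ m → A m ⊆ L m := by
    intro m h1
    simp only [hA]
    rw [if_neg (by omega)]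
    split_ifs with h
    · rw [h]; exact Finset.sdiff_subset
    · exact subset_rfl
  have hgspec : ∀ m, 1 ≤ m → m < ℓ → g m ∈ A m ∧ g m ≠ g (m - 1) ∧ g m ≠ g (m - 2) :=
    fun m h1 h2 => pcfGreedy_spec A m h1 (hAcard m h1 h2)
  have hgL : ∀ m, 1 ≤ m → m < ℓ → g m ∈ L m := fun m h1 h2 => hAsub m h1 (hgspec m h1 h2).1
  have hAl2 : A (ℓ - 2) = L (ℓ - 2) \ {c0} := by
    have h20 : ℓ - 2 ≠ 0 := by omega
    simp [hA, h20]
  have hgne2 : g (ℓ - 2) ≠ c0 := by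
    have hmem := (hgspec (ℓ - 2) (by omega) (by omega)).1
    rw [hAl2, Finset.mem_sdiff] at hmem
    simpa using hmem.2
  have hlast : (L (ℓ - 1) \ {g (ℓ - 2), g (ℓ - 3), g 1}).Nonempty := by
    apply pcf_sdiff_nonempty
    have hc : ({g (ℓ - 2), g (ℓ - 3), g 1} : Finset ℕ).card ≤ 3 :=
      le_trans (Finset.card_insert_le _ _) (by have := pcf_pair_card (g (ℓ - 3)) (g 1); omega)
    have := hL (ℓ - 1) (by omega); omega
  set cl : ℕ := pcfPick (L (ℓ - 1) \ {g (ℓ - 2), g (ℓ - 3), g 1}) with hcl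
  have hclmem := pcfPick_mem hlast
  rw [Finset.mem_sdiff] at hclmem
  have hclL : cl ∈ L (ℓ - 1) := hclmem.1
  have hclne : cl ≠ g (ℓ - 2) ∧ cl ≠ g (ℓ - 3) ∧ cl ≠ g 1 := by
    have := hclmem.2
    simp only [Finset.mem_insert, Finset.mem_singleton] at this
    push_neg at this
    exact this
  refine ⟨fun i => if i = ℓ - 1 then cl else g i, ?_⟩
  intro i hi
  beta_reduce
  refine ⟨?_, ?_, ?_⟩
  · by_cases h : i = ℓ - 1
    · rw [if_pos h, h]; exact hclL
    · rw [if_neg h]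
      rcases Nat.eq_zero_or_pos i with h0 | h1
      · rw [h0, hg0]; exact hc0
      · exact hgL i h1 hi
  · rw [pcf_mod1 ℓ i (by omega) hi]
    by_cases h : i = ℓ - 1
    · rw [if_pos (show i + 1 = ℓ by omega), if_pos h, if_neg (show ¬(0 = ℓ - 1) by omega), hg0]
      exact fun he => hc0' (he ▸ hclL)
    · rw [if_neg (show ¬(i + 1 = ℓ) by omega), if_neg h]
      by_cases h2 : i = ℓ - 2
      · rw [if_pos (show i + 1 = ℓ - 1 by omega), h2]
        exact hclne.1.symm
      · rw [if_neg (show ¬(i + 1 = ℓ - 1) by omega)]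
        have h' := (hgspec (i + 1) (by omega) (by omega)).2.1
        rw [Nat.add_sub_cancel] at h'
        exact h'.symm
  · rw [pcf_mod2 ℓ i (by omega) hi]
    by_cases h : i = ℓ - 1
    · rw [if_neg (show ¬(i + 2 = ℓ) by omega), if_pos (show i + 1 = ℓ by omega), if_pos h,
        if_neg (show ¬(1 = ℓ - 1) by omega)]
      exact hclne.2.2
    · rw [if_neg h]
      by_cases h2 : i = ℓ - 2
      · rw [if_pos (show i + 2 = ℓ by omega), if_neg (show ¬(0 = ℓ - 1) by omega), h2, hg0]
        exact hgne2
      · rw [if_neg (show ¬(i + 2 = ℓ) by omega), if_neg (show ¬(i + 1 = ℓ) by omega)]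
        by_cases h3 : i = ℓ - 3
        · rw [if_pos (show i + 2 = ℓ - 1 by omega), h3]
          exact hclne.2.1.symm
        · rw [if_neg (show ¬(i + 2 = ℓ - 1) by omega)]
          have h' := (hgspec (i + 2) (by omega) (by omega)).2.2
          rw [Nat.add_sub_cancel] at h'
          exact h'.symm

/-- The pattern case: with four distinct colors available everywhere, an explicit
periodic pattern colors the cycle-square (here `ℓ ≠ 5` is essential). -/
lemma pcf_pattern_case (ℓ : ℕ) (hℓ : 3 ≤ ℓ) (hne : ℓ ≠ 5) (a b c d : ℕ)
    (hab : a ≠ b) (hac : a ≠ c) (had : a ≠ d) (hbc : b ≠ c) (hbd : b ≠ d) (hcd : c ≠ d) :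
    ∃ f : ℕ → ℕ, ∀ i, i < ℓ →
      (f i = a ∨ f i = b ∨ f i = c ∨ f i = d) ∧
        f i ≠ f ((i + 1) % ℓ) ∧ f i ≠ f ((i + 2) % ℓ) := by
  set p3 : ℕ → ℕ := fun i => if i % 3 = 0 then a else if i % 3 = 1 then b else c with hp3def
  set p4 : ℕ → ℕ :=
    fun j => if j % 4 = 0 then a else if j % 4 = 1 then b else if j % 4 = 2 then c else d
    with hp4def
  have hm3 : ∀ i, p3 i = a ∨ p3 i = b ∨ p3 i = c := by
    intro i; simp only [hp3def]; split_ifs <;> tauto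
  have hm4 : ∀ j, p4 j = a ∨ p4 j = b ∨ p4 j = c ∨ p4 j = d := by
    intro j; simp only [hp4def]; split_ifs <;> tauto
  have hp3 : ∀ i j, i % 3 ≠ j % 3 → p3 i ≠ p3 j := by
    intro i j h; simp only [hp3def]; split_ifs <;> omega
  have hp4 : ∀ i j, i % 4 ≠ j % 4 → p4 i ≠ p4 j := by
    intro i j h; simp only [hp4def]; split_ifs <;> omega
  have hp34 : ∀ i j, i % 3 ≠ j % 4 → p3 i ≠ p4 j := by
    intro i j h; simp only [hp3def, hp4def]; split_ifs <;> omega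
  have hp3d : ∀ i, p3 i ≠ d := by
    intro i; simp only [hp3def]; split_ifs <;> omega
  have h3 : ℓ % 3 = 0 ∨ ℓ % 3 = 1 ∨ ℓ % 3 = 2 := by omega
  rcases h3 with hr | hr | hr
  · -- ℓ ≡ 0 (mod 3) : pure pattern a b c a b c ...
    have hdvd : (3 : ℕ) ∣ ℓ := Nat.dvd_of_mod_eq_zero hr
    refine ⟨p3, fun i hi => ⟨by rcases hm3 i with h | h | h <;> tauto, ?_, ?_⟩⟩
    · exact hp3 _ _ (by rw [Nat.mod_mod_of_dvd _ hdvd]; omega)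
    · exact hp3 _ _ (by rw [Nat.mod_mod_of_dvd _ hdvd]; omega)
  · -- ℓ ≡ 1 (mod 3) : pattern a b c ... with a final d
    have hℓ4 : 4 ≤ ℓ := by omega
    refine ⟨fun i => if i = ℓ - 1 then d else p3 i, fun i hi => ?_⟩
    beta_reduce
    refine ⟨?_, ?_, ?_⟩
    · by_cases h : i = ℓ - 1
      · rw [if_pos h]; tauto
      · rw [if_neg h]; rcases hm3 i with h' | h' | h' <;> tauto
    · rw [pcf_mod1 ℓ i (by omega) hi]
      by_cases h : i = ℓ - 1
      · rw [if_pos (show i + 1 = ℓ by omega), if_pos h, if_neg (show ¬(0 = ℓ - 1) by omega)]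
        exact (hp3d 0).symm
      · rw [if_neg (show ¬(i + 1 = ℓ) by omega), if_neg h]
        by_cases h2 : i + 1 = ℓ - 1
        · rw [if_pos h2]
          exact hp3d i
        · rw [if_neg h2]
          exact hp3 _ _ (by omega)
    · rw [pcf_mod2 ℓ i (by omega) hi]
      by_cases h : i = ℓ - 1
      · rw [if_neg (show ¬(i + 2 = ℓ) by omega), if_pos (show i + 1 = ℓ by omega), if_pos h,
          if_neg (show ¬(1 = ℓ - 1) by omega)]
        exact (hp3d 1).symm
      · rw [if_neg h]
        by_cases h2 : i = ℓ - 2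
        · rw [if_pos (show i + 2 = ℓ by omega), if_neg (show ¬(0 = ℓ - 1) by omega)]
          exact hp3 _ _ (by omega)
        · rw [if_neg (show ¬(i + 2 = ℓ) by omega), if_neg (show ¬(i + 1 = ℓ) by omega)]
          by_cases h3' : i + 2 = ℓ - 1
          · rw [if_pos h3']
            exact hp3d i
          · rw [if_neg h3']
            exact hp3 _ _ (by omega)
  · -- ℓ ≡ 2 (mod 3), so ℓ ≥ 8 : pattern a b c ... followed by a b c d a b c d
    have hℓ8 : 8 ≤ ℓ := by omega
    set B : ℕ := ℓ - 8 with hB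
    have hB3 : B % 3 = 0 := by omega
    have main : ∀ i j : ℕ, i < ℓ → j < ℓ →
        ((j = i + 1) ∨ (j = i + 2) ∨ (i + 1 = ℓ ∧ j = 0) ∨ (i + 1 = ℓ ∧ j = 1) ∨
          (i + 2 = ℓ ∧ j = 0)) →
        (if i < B then p3 i else p4 (i - B)) ≠ (if j < B then p3 j else p4 (j - B)) := by
      intro i j hi hj hP
      rcases hP with hc' | hc' | ⟨hc1, hc2⟩ | ⟨hc1, hc2⟩ | ⟨hc1, hc2⟩ <;>
        split_ifs with h1 h2 h2 <;>
          first
            | exact hp3 _ _ (by omega)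
            | exact hp34 _ _ (by omega)
            | exact (hp34 _ _ (by omega)).symm
            | exact hp4 _ _ (by omega)
    refine ⟨fun i => if i < B then p3 i else p4 (i - B), fun i hi => ?_⟩
    beta_reduce
    refine ⟨?_, ?_, ?_⟩
    · by_cases h : i < B
      · rw [if_pos h]; rcases hm3 i with h' | h' | h' <;> tauto
      · rw [if_neg h]; exact hm4 _
    · refine main i ((i + 1) % ℓ) hi (Nat.mod_lt _ (by omega)) ?_
      rw [pcf_mod1 ℓ i (by omega) hi]
      by_cases h : i + 1 = ℓ
      · rw [if_pos h]; omega
      · rw [if_neg h]; omega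
    · refine main i ((i + 2) % ℓ) hi (Nat.mod_lt _ (by omega)) ?_
      rw [pcf_mod2 ℓ i (by omega) hi]
      by_cases h : i + 2 = ℓ
      · rw [if_pos h]; omega
      · rw [if_neg h]
        by_cases h2 : i + 1 = ℓ
        · rw [if_pos h2]; omega
        · rw [if_neg h2]; omega

open Fin.CommRing in
/-- Existence of a coloring of the square of the cycle from lists of size 4. -/
lemma pcf_fin_cyclic (n : ℕ) (hne : n + 3 ≠ 5) (L : Fin (n + 3) → Finset ℕ)
    (hL : ∀ v, 4 ≤ (L v).card) :
    ∃ c : Fin (n + 3) → ℕ,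
      (∀ v, c v ∈ L v) ∧ (∀ v, c v ≠ c (v + 1)) ∧ (∀ v, c v ≠ c (v + 2)) := by
  classical
  by_cases hrot : ∃ s : Fin (n + 3), ¬ L s ⊆ L (s - 1)
  · obtain ⟨s, hs⟩ := hrot
    obtain ⟨c0, hc0, hc0'⟩ := Finset.not_subset.mp hs
    have hcast : ((n + 3 - 1 : ℕ) : Fin (n + 3)) = -1 := by
      have h0 : ((n + 3 - 1 : ℕ) : Fin (n + 3)) + 1 = 0 := by
        rw [show ((1 : Fin (n + 3))) = ((1 : ℕ) : Fin (n + 3)) by simp, ← Nat.cast_add,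
          show n + 3 - 1 + 1 = n + 3 by omega, Fin.natCast_self]
      exact eq_neg_of_add_eq_zero_left h0
    obtain ⟨cN, hcN⟩ := pcf_greedy_case (n + 3) (by omega)
      (fun i => L (s + (i : Fin (n + 3)))) (fun i _ => hL _) c0
      (by simpa using hc0)
      (by
        show c0 ∉ L (s + ((n + 3 - 1 : ℕ) : Fin (n + 3)))
        rw [hcast]
        simpa [sub_eq_add_neg] using hc0')
    refine ⟨fun v => cN ((v - s).val), ?_, ?_, ?_⟩
    · intro v
      have h1 := (hcN ((v - s).val) (Fin.is_lt _)).1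
      rwa [Fin.cast_val_eq_self, show s + (v - s) = v by ring] at h1
    · intro v
      have h1 := (hcN ((v - s).val) (Fin.is_lt _)).2.1
      rwa [show ((v - s).val + 1) % (n + 3) = ((v + 1) - s).val by
        rw [show (v + 1) - s = (v - s) + 1 by ring, Fin.val_add, Fin.val_one]] at h1
    · intro v
      have h1 := (hcN ((v - s).val) (Fin.is_lt _)).2.2
      rwa [show ((v - s).val + 2) % (n + 3) = ((v + 2) - s).val by
        rw [show (v + 2) - s = (v - s) + 2 by ring, Fin.val_add, Fin.val_two]] at h1
  · push_neg at hrot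
    have hchain : ∀ (k : ℕ) (v : Fin (n + 3)), L v ⊆ L (v - (k : Fin (n + 3))) := by
      intro k
      induction k with
      | zero => simp
      | succ k ih =>
        intro v
        refine (ih v).trans ?_
        rw [Nat.cast_add, Nat.cast_one, ← sub_sub]
        exact hrot _
    have hall : ∀ v w : Fin (n + 3), L v ⊆ L w := by
      intro v w
      have h1 := hchain ((v - w).val) v
      rwa [Fin.cast_val_eq_self, sub_sub_cancel] at h1
    obtain ⟨t, hts, ht4⟩ := Finset.exists_subset_card_eq (hL 0)
    obtain ⟨x, hx⟩ := Finset.card_pos.mp (show 0 < t.card by omega)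
    have h3 : (t.erase x).card = 3 := by rw [Finset.card_erase_of_mem hx, ht4]
    obtain ⟨y, z, w, hyz, hyw, hzw, hset⟩ := Finset.card_eq_three.mp h3
    have hy : y ∈ t.erase x := by rw [hset]; simp
    have hz : z ∈ t.erase x := by rw [hset]; simp
    have hw : w ∈ t.erase x := by rw [hset]; simp
    have hxy : x ≠ y := fun h => (Finset.mem_erase.mp hy).1 h.symm
    have hxz : x ≠ z := fun h => (Finset.mem_erase.mp hz).1 h.symm
    have hxw : x ≠ w := fun h => (Finset.mem_erase.mp hw).1 h.symm
    have hxL : x ∈ L 0 := hts hx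
    have hyL : y ∈ L 0 := hts (Finset.mem_of_mem_erase hy)
    have hzL : z ∈ L 0 := hts (Finset.mem_of_mem_erase hz)
    have hwL : w ∈ L 0 := hts (Finset.mem_of_mem_erase hw)
    obtain ⟨f, hf⟩ := pcf_pattern_case (n + 3) (by omega) hne x y z w hxy hxz hxw hyz hyw hzw
    refine ⟨fun v => f v.val, ?_, ?_, ?_⟩
    · intro v
      apply hall 0 v
      beta_reduce
      rcases (hf v.val v.isLt).1 with h | h | h | h <;> rw [h] <;> assumption
    · intro v
      have h1 := (hf v.val v.isLt).2.1
      rwa [show (v.val + 1) % (n + 3) = (v + 1).val by rw [Fin.val_add, Fin.val_one]] at h1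
    · intro v
      have h1 := (hf v.val v.isLt).2.2
      rwa [show (v.val + 2) % (n + 3) = (v + 2).val by rw [Fin.val_add, Fin.val_two]] at h1

/-- Every cycle of length `ℓ ≥ 3` with `ℓ ≠ 5` is proper conflict-free
(degree+2)-choosable: any list assignment with lists of size at least `4 = 2 + 2`
admits a proper conflict-free coloring from the lists. -/
theorem cycle_pcf_degree_plus_two_choosable (ℓ : ℕ) (hℓ : 3 ≤ ℓ) (hne : ℓ ≠ 5)
    (L : Fin ℓ → Finset ℕ) (hL : ∀ v : Fin ℓ, 4 ≤ (L v).card) :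
    ∃ φ : Fin ℓ → ℕ,
      IsPCFColoring (SimpleGraph.cycleGraph ℓ) φ ∧ ∀ v : Fin ℓ, φ v ∈ L v := by
  obtain ⟨m, rfl⟩ : ∃ m, ℓ = m + 3 := ⟨ℓ - 3, by omega⟩
  obtain ⟨c, hmem, hc1, hc2⟩ := pcf_fin_cyclic m hne L hL
  have hval : ∀ u v : Fin (m + 3), (u - v).val = 1 → u = v + 1 := by
    intro u v h
    have h1 : u - v = 1 := Fin.ext (by rw [h, Fin.val_one])
    have := sub_eq_iff_eq_add.mp h1
    rw [this]; open Fin.CommRing in ring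
  refine ⟨c, ⟨?_, ?_⟩, hmem⟩
  · intro u v huv
    rw [SimpleGraph.cycleGraph_adj'] at huv
    rcases huv with h | h
    · rw [hval u v h]
      exact (hc1 v).symm
    · rw [hval v u h]
      exact hc1 u
  · intro v _
    refine ⟨c (v + 1), v + 1, ⟨?_, rfl⟩, ?_⟩
    · rw [SimpleGraph.mem_neighborSet, SimpleGraph.cycleGraph_adj']
      right
      rw [add_sub_cancel_left, Fin.val_one]
    · rintro u ⟨hu, hcol⟩
      rw [SimpleGraph.mem_neighborSet, SimpleGraph.cycleGraph_adj'] at hu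
      rcases hu with h | h
      · -- v = u + 1, i.e. u = v - 1 : impossible by colors
        have h1 : v = u + 1 := hval v u h
        have h2 : u = v - 1 := by rw [h1]; open Fin.CommRing in ring
        exfalso
        apply hc2 (v - 1)
        rw [show v - 1 + 2 = v + 1 by open Fin.CommRing in ring, ← h2]
        exact hcol
      · exact hval u v h
end

section
/- Let C = v₀v₁v₂v₃v₄v₀ be the cycle graph on 5 vertices and let L be a list assignment of C with |L(v_i)| ≥ 4 for every i. Then C admits no proper conflict-free L-coloring if and only if L(v₀) = L(v₁) = L(v₂) = L(v₃) = L(v₄) and |L(v₀)| = 4. -/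
lemma c5_nbrs : ∀ v a b x : Fin 5, (SimpleGraph.cycleGraph 5).Adj v a →
    (SimpleGraph.cycleGraph 5).Adj v b → a ≠ b →
    (SimpleGraph.cycleGraph 5).Adj v x → x = a ∨ x = b := by decide

lemma c5_pairs : ∀ i j : Fin 5, i ≠ j → (SimpleGraph.cycleGraph 5).Adj i j ∨
    ∃ v, (SimpleGraph.cycleGraph 5).Adj v i ∧ (SimpleGraph.cycleGraph 5).Adj v j := by decide

lemma pcf_iff_injective (φ : Fin 5 → ℕ) :
    IsPCFColoring (SimpleGraph.cycleGraph 5) φ ↔ Function.Injective φ := by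
  constructor
  · rintro ⟨hp, hcf⟩
    have key : ∀ v a b : Fin 5, (SimpleGraph.cycleGraph 5).Adj v a →
        (SimpleGraph.cycleGraph 5).Adj v b → a ≠ b → φ a ≠ φ b := by
      intro v a b hva hvb hab heq
      obtain ⟨c, w, ⟨hw, hwc⟩, huniq⟩ := hcf v ⟨a, hva⟩
      have hw' : (SimpleGraph.cycleGraph 5).Adj v w := hw
      rcases c5_nbrs v a b w hva hvb hab hw' with h | h
      · have hb : b = w := huniq b ⟨hvb, by rw [← hwc, h]; exact heq.symm⟩
        exact hab (h ▸ hb).symm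
      · have ha : a = w := huniq a ⟨hva, by rw [← hwc, h]; exact heq⟩
        exact hab (ha.trans h)
    intro i j heq
    by_contra hne
    rcases c5_pairs i j hne with h | ⟨v, hvi, hvj⟩
    · exact hp h heq
    · exact key v i j hvi hvj hne heq
  · intro hinj
    refine ⟨fun a b hab h => hab.ne (hinj h), fun v ⟨u, hu⟩ => ⟨φ u, u, ⟨hu, rfl⟩, ?_⟩⟩
    rintro w ⟨hw, hwc⟩
    exact hinj hwc

/-- Let `C` be the `5`-cycle and `L` a list assignment with all lists of size at
least `4`. Then `C` admits no proper conflict-free `L`-coloring if and only if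
all five lists are equal and have size exactly `4`. -/
theorem five_cycle_pcf_characterization (L : Fin 5 → Finset ℕ)
    (hL : ∀ v : Fin 5, 4 ≤ (L v).card) :
    (¬ ∃ φ : Fin 5 → ℕ,
        IsPCFColoring (SimpleGraph.cycleGraph 5) φ ∧ ∀ v : Fin 5, φ v ∈ L v) ↔
      ((∀ i j : Fin 5, L i = L j) ∧ (L 0).card = 4) := by
  have hiff : (∃ φ : Fin 5 → ℕ,
      IsPCFColoring (SimpleGraph.cycleGraph 5) φ ∧ ∀ v : Fin 5, φ v ∈ L v) ↔
      ∃ f : Fin 5 → ℕ, Function.Injective f ∧ ∀ x, f x ∈ L x := by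
    constructor
    · rintro ⟨φ, hpcf, hmem⟩
      exact ⟨φ, (pcf_iff_injective φ).mp hpcf, hmem⟩
    · rintro ⟨f, hinj, hmem⟩
      exact ⟨f, (pcf_iff_injective f).mpr hinj, hmem⟩
  rw [hiff, ← Finset.all_card_le_biUnion_card_iff_exists_injective L]
  constructor
  · intro hnot
    by_contra hcon
    apply hnot
    intro s
    rcases Finset.eq_empty_or_nonempty s with rfl | ⟨i, hi⟩
    · simp
    have hsub : L i ⊆ s.biUnion L := Finset.subset_biUnion_of_mem L hi
    have h4 : 4 ≤ (s.biUnion L).card := le_trans (hL i) (Finset.card_le_card hsub)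
    by_cases hs : s.card ≤ 4
    · omega
    · -- s.card = 5, so s = univ
      have hs5 : s = Finset.univ := by
        apply Finset.eq_univ_of_card
        have := Finset.card_le_univ s
        simp only [Finset.card_univ, Fintype.card_fin] at this ⊢
        omega
      subst hs5
      by_contra hlt
      have hU : (Finset.univ.biUnion L).card ≤ 4 := by
        simp only [Finset.card_univ, Fintype.card_fin] at hlt
        omega
      have heqall : ∀ j : Fin 5, L j = Finset.univ.biUnion L := by
        intro j
        apply Finset.eq_of_subset_of_card_le (Finset.subset_biUnion_of_mem L (Finset.mem_univ j))
        exact le_trans hU (hL j)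
      apply hcon
      constructor
      · intro a b; rw [heqall a, heqall b]
      · have := heqall 0
        have h40 := hL 0
        rw [this] at h40 ⊢
        omega
  · rintro ⟨hall, hcard⟩ hHall
    have h5 := hHall Finset.univ
    have hU : Finset.univ.biUnion L = L 0 := by
      apply Finset.Subset.antisymm
      · intro x hx
        rw [Finset.mem_biUnion] at hx
        obtain ⟨j, _, hj⟩ := hx
        rw [hall j 0] at hj
        exact hj
      · exact Finset.subset_biUnion_of_mem L (Finset.mem_univ 0)
    rw [hU] at h5
    simp only [Finset.card_univ, Fintype.card_fin] at h5
    omega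
end

section
/- Let s ≥ 3 and let P = u₀u₁⋯u_s be the path graph on s+1 vertices. Let L be a list assignment of P such that |L(u₀)| ≥ 2, |L(u_s)| ≥ 2, |L(u₁)| ≥ 3, |L(u_{s−1})| ≥ 3, and |L(u_i)| ≥ 4 for every i with 2 ≤ i ≤ s−2. Then P admits a proper conflict-free L-coloring. -/
lemma pcf_base (L : ℕ → Finset ℕ) (h0 : 2 ≤ (L 0).card) (h1 : 3 ≤ (L 1).card)
    (h2 : 3 ≤ (L 2).card) (h3 : 2 ≤ (L 3).card) :
    ∃ a b c d : ℕ, a ∈ L 0 ∧ b ∈ L 1 ∧ c ∈ L 2 ∧ d ∈ L 3 ∧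
      a ≠ b ∧ a ≠ c ∧ b ≠ c ∧ b ≠ d ∧ c ≠ d := by
  -- first find a good middle pair
  have claim : ∃ x ∈ L 1, ∃ y ∈ L 2, x ≠ y ∧ ¬ (L 0 ⊆ {x, y}) ∧ ¬ (L 3 ⊆ {x, y}) := by
    by_contra H
    push_neg at H
    have mem_of : ∀ (S : Finset ℕ) (x y : ℕ), S ⊆ {x, y} → 2 ≤ S.card → x ∈ S := by
      intro S x y hsub hcard
      by_contra hx
      have : S ⊆ {y} := by
        intro z hz
        have := hsub hz
        simp only [Finset.mem_insert, Finset.mem_singleton] at this ⊢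
        rcases this with h | h
        · exact absurd (h ▸ hz) hx
        · exact h
      have := Finset.card_le_card this
      simp at this; omega
    have key : ∀ x ∈ L 1, x ∈ L 0 ∧ (L 0).card ≤ 2 := by
      intro x hx
      have hcard : 2 ≤ ((L 2).erase x).card := by
        have := Finset.pred_card_le_card_erase (s := L 2) (a := x)
        omega
      obtain ⟨y, hy, y', hy', hyy'⟩ := Finset.one_lt_card.mp (by omega : 1 < ((L 2).erase x).card)
      have hxy : x ≠ y := (Finset.ne_of_mem_erase hy).symm
      have hxy' : x ≠ y' := (Finset.ne_of_mem_erase hy').symm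
      have hy2 : y ∈ L 2 := Finset.mem_of_mem_erase hy
      have hy2' : y' ∈ L 2 := Finset.mem_of_mem_erase hy'
      have A1 : L 0 ⊆ {x, y} ∨ L 3 ⊆ {x, y} :=
        or_iff_not_imp_left.mpr (H x hx y hy2 hxy)
      have A2 : L 0 ⊆ {x, y'} ∨ L 3 ⊆ {x, y'} :=
        or_iff_not_imp_left.mpr (H x hx y' hy2' hxy')
      have single : ∀ (S : Finset ℕ), S ⊆ {x, y} → S ⊆ {x, y'} → S ⊆ {x} := by
        intro S hs hs' z hz
        have h1 := hs hz; have h2 := hs' hz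
        simp only [Finset.mem_insert, Finset.mem_singleton] at h1 h2 ⊢
        rcases h1 with h | h
        · exact h
        · rcases h2 with h' | h'
          · exact h'
          · exact absurd (h.symm.trans h') hyy'
      rcases A1 with hA | hB
      · rcases A2 with hA' | hB'
        · have := Finset.card_le_card (single _ hA hA')
          simp at this; omega
        · refine ⟨mem_of _ _ _ hA h0, ?_⟩
          have := Finset.card_le_card hA
          have h2' : ({x, y} : Finset ℕ).card ≤ 2 := Finset.card_insert_le _ _ |>.trans (by simp)
          omega
      · rcases A2 with hA' | hB'
        · refine ⟨mem_of _ _ _ hA' h0, ?_⟩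
          have := Finset.card_le_card hA'
          have h2' : ({x, y'} : Finset ℕ).card ≤ 2 := Finset.card_insert_le _ _ |>.trans (by simp)
          omega
        · have := Finset.card_le_card (single _ hB hB')
          simp at this; omega
    have hsub : L 1 ⊆ L 0 := fun x hx => (key x hx).1
    obtain ⟨x, hx⟩ := Finset.card_pos.mp (by omega : 0 < (L 1).card)
    have := Finset.card_le_card hsub
    have := (key x hx).2
    omega
  obtain ⟨x, hx, y, hy, hxy, hL0, hL3⟩ := claim
  rw [Finset.not_subset] at hL0 hL3
  obtain ⟨a, ha, ha'⟩ := hL0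
  obtain ⟨d, hd, hd'⟩ := hL3
  simp only [Finset.mem_insert, Finset.mem_singleton, not_or] at ha' hd'
  exact ⟨a, x, y, d, ha, hx, hy, hd, ha'.1, ha'.2, hxy, Ne.symm hd'.1, Ne.symm hd'.2⟩

lemma pcf_key : ∀ s : ℕ, 3 ≤ s → ∀ L : ℕ → Finset ℕ,
    2 ≤ (L 0).card → 2 ≤ (L s).card → 3 ≤ (L 1).card → 3 ≤ (L (s-1)).card →
    (∀ i, 2 ≤ i → i ≤ s - 2 → 4 ≤ (L i).card) →
    ∃ φ : ℕ → ℕ, (∀ i, i ≤ s → φ i ∈ L i) ∧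
      (∀ i, i + 1 ≤ s → φ i ≠ φ (i+1)) ∧ (∀ i, i + 2 ≤ s → φ i ≠ φ (i+2)) := by
  intro s hs
  induction s, hs using Nat.le_induction with
  | base =>
    intro L h0 hs' h1 hs1 _
    obtain ⟨a, b, c, d, ha, hb, hc, hd, hab, hac, hbc, hbd, hcd⟩ :=
      pcf_base L h0 h1 (by simpa using hs1) hs'
    refine ⟨fun i => if i = 0 then a else if i = 1 then b else if i = 2 then c else d, ?_, ?_, ?_⟩
    · intro i hi; interval_cases i <;> simpa
    · intro i hi
      have hub : i ≤ 2 := by omega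
      interval_cases i <;> simpa
    · intro i hi
      have hub : i ≤ 1 := by omega
      interval_cases i <;> simpa
  | succ s hs IH =>
    intro L h0 hs' h1 hs1 hmid
    obtain ⟨c0, hc0⟩ := Finset.card_pos.mp (by omega : 0 < (L 0).card)
    set L' : ℕ → Finset ℕ :=
      fun i => if i = 0 then (L 1).erase c0 else if i = 1 then (L 2).erase c0 else L (i+1) with hL'
    have e0 : L' 0 = (L 1).erase c0 := by simp [hL']
    have e1 : L' 1 = (L 2).erase c0 := by simp [hL']
    have e2 : ∀ i, 2 ≤ i → L' i = L (i+1) := by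
      intro i hi
      simp only [hL']
      rw [if_neg (by omega), if_neg (by omega)]
    have hL2 : 4 ≤ (L 2).card := hmid 2 (by omega) (by omega)
    obtain ⟨ψ, hmem, hne1, hne2⟩ := IH L'
      (by rw [e0]; have := Finset.pred_card_le_card_erase (s := L 1) (a := c0); omega)
      (by rw [e2 s (by omega)]; simpa using hs')
      (by rw [e1]; have := Finset.pred_card_le_card_erase (s := L 2) (a := c0); omega)
      (by rw [e2 (s-1) (by omega)]; rw [(by omega : s - 1 + 1 = s)]
          have : s + 1 - 1 = s := by omega
          rw [this] at hs1; exact hs1)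
      (by intro i hi1 hi2; rw [e2 i hi1]; exact hmid (i+1) (by omega) (by omega))
    refine ⟨fun i => if i = 0 then c0 else ψ (i-1), ?_, ?_, ?_⟩
    · intro i hi
      rcases Nat.eq_zero_or_pos i with h | h
      · subst h; simpa using hc0
      show (if i = 0 then c0 else ψ (i-1)) ∈ L i
      rw [if_neg (by omega)]
      have hm := hmem (i-1) (by omega)
      rcases (by omega : i = 1 ∨ i = 2 ∨ 3 ≤ i) with h1' | h2' | h3'
      · subst h1'; rw [e0] at hm; exact Finset.mem_of_mem_erase (by simpa using hm)
      · subst h2'; rw [e1] at hm; exact Finset.mem_of_mem_erase (by simpa using hm)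
      · rw [e2 (i-1) (by omega)] at hm; rwa [(by omega : i - 1 + 1 = i)] at hm
    · intro i hi
      rcases Nat.eq_zero_or_pos i with h | h
      · subst h
        simp only [if_pos rfl, if_neg (by omega : ¬ (0:ℕ) + 1 = 0)]
        have hm := hmem 0 (by omega)
        rw [e0] at hm
        exact (Finset.ne_of_mem_erase hm).symm
      · show (if i = 0 then c0 else ψ (i-1)) ≠ (if i + 1 = 0 then c0 else ψ (i + 1 - 1))
        rw [if_neg (by omega), if_neg (by omega)]
        have := hne1 (i-1) (by omega)
        rwa [(by omega : i - 1 + 1 = i + 1 - 1)] at this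
    · intro i hi
      rcases Nat.eq_zero_or_pos i with h | h
      · subst h
        simp only [if_pos rfl, if_neg (by omega : ¬ (0:ℕ) + 2 = 0)]
        have hm := hmem 1 (by omega)
        rw [e1] at hm
        exact (Finset.ne_of_mem_erase hm).symm
      · show (if i = 0 then c0 else ψ (i-1)) ≠ (if i + 2 = 0 then c0 else ψ (i + 2 - 1))
        rw [if_neg (by omega), if_neg (by omega)]
        have := hne2 (i-1) (by omega)
        rwa [(by omega : i - 1 + 2 = i + 2 - 1)] at this



/-- Let `P = u₀u₁⋯u_s` be a path of length `s ≥ 3` (on `s + 1` vertices), and let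
`L` be a list assignment with `|L(u₀)|, |L(u_s)| ≥ 2`, `|L(u₁)|, |L(u_{s-1})| ≥ 3`,
and `|L(u_i)| ≥ 4` for `2 ≤ i ≤ s - 2`. Then `P` admits a proper conflict-free
`L`-coloring. Here the path graph on `Fin (s+1)` has `u_i = i`. -/
theorem path_pcf_list_colorable (s : ℕ) (hs : 3 ≤ s)
    (L : Fin (s + 1) → Finset ℕ)
    (h0 : 2 ≤ (L ⟨0, by omega⟩).card)
    (hs' : 2 ≤ (L ⟨s, by omega⟩).card)
    (h1 : 3 ≤ (L ⟨1, by omega⟩).card)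
    (hs1 : 3 ≤ (L ⟨s - 1, by omega⟩).card)
    (hmid : ∀ i : Fin (s + 1), 2 ≤ i.val → i.val ≤ s - 2 → 4 ≤ (L i).card) :
    ∃ φ : Fin (s + 1) → ℕ,
      IsPCFColoring (SimpleGraph.pathGraph (s + 1)) φ ∧ ∀ v, φ v ∈ L v := by
  have hlt : ∀ i : ℕ, i % (s + 1) < s + 1 := fun i => Nat.mod_lt _ (by omega)
  let L' : ℕ → Finset ℕ := fun i => L ⟨i % (s + 1), hlt i⟩
  have eL : ∀ i (h : i < s + 1), L' i = L ⟨i, h⟩ := fun i h => by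
    show L _ = _
    congr 1
    exact Fin.ext (Nat.mod_eq_of_lt h)
  obtain ⟨ψ, hmem, hne1, hne2⟩ := pcf_key s hs L'
    (by rw [eL 0 (by omega)]; exact h0)
    (by rw [eL s (by omega)]; exact hs')
    (by rw [eL 1 (by omega)]; exact h1)
    (by rw [eL (s-1) (by omega)]; exact hs1)
    (by intro i hi1 hi2; rw [eL i (by omega)]; exact hmid ⟨i, by omega⟩ hi1 hi2)
  refine ⟨fun v => ψ v.val, ⟨?_, ?_⟩, ?_⟩
  · -- proper
    intro a b hab
    rw [SimpleGraph.pathGraph_adj] at hab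
    rcases hab with h | h
    · have hb := b.isLt
      have := hne1 a.val (by omega)
      rwa [h] at this
    · have ha := a.isLt
      have := hne1 b.val (by omega)
      rw [h] at this
      exact this.symm
  · -- conflict-free
    intro v _
    rcases (by omega : v.val = 0 ∨ v.val = s ∨ (0 < v.val ∧ v.val < s)) with h | h | ⟨h1', h2'⟩
    · refine ⟨ψ 1, ⟨⟨1, by omega⟩, ⟨?_, rfl⟩, ?_⟩⟩
      · rw [SimpleGraph.mem_neighborSet, SimpleGraph.pathGraph_adj]
        left; simp only [Fin.val_mk]; omega
      · rintro w ⟨hw, hwc⟩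
        rw [SimpleGraph.mem_neighborSet, SimpleGraph.pathGraph_adj] at hw
        have : w.val = 1 := by omega
        exact Fin.ext this
    · refine ⟨ψ (s-1), ⟨⟨s-1, by omega⟩, ⟨?_, rfl⟩, ?_⟩⟩
      · rw [SimpleGraph.mem_neighborSet, SimpleGraph.pathGraph_adj]
        right; simp only [Fin.val_mk]; omega
      · rintro w ⟨hw, hwc⟩
        rw [SimpleGraph.mem_neighborSet, SimpleGraph.pathGraph_adj] at hw
        have hwlt := w.isLt
        have : w.val = s - 1 := by omega
        exact Fin.ext this
    · refine ⟨ψ (v.val + 1), ⟨⟨v.val + 1, by omega⟩, ⟨?_, rfl⟩, ?_⟩⟩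
      · rw [SimpleGraph.mem_neighborSet, SimpleGraph.pathGraph_adj]
        left; simp only [Fin.val_mk]
      · rintro w ⟨hw, hwc⟩
        rw [SimpleGraph.mem_neighborSet, SimpleGraph.pathGraph_adj] at hw
        rcases hw with h' | h'
        · exact Fin.ext (by simp only [Fin.val_mk]; omega)
        · -- w.val + 1 = v.val, contradiction with dist-2
          exfalso
          have hd := hne2 w.val (by omega)
          rw [(by omega : w.val + 2 = v.val + 1)] at hd
          exact hd hwc
  · intro v
    have := hmem v.val (by omega)
    rwa [eL v.val v.isLt, Fin.eta] at this
end

section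
/- Let G be a simple graph and let u₁, u₂, …, u_r (r ≥ 3) be distinct vertices of G such that u₁u₂, u₂u₃, …, u_{r−1}u_r, and u_ru₁ are edges of G, and d_G(u_i) = 2 for every i with 2 ≤ i ≤ r−1. Let G′ = G − {u₂, …, u_{r−1}} (so the edge u₁u_r lies in G′). Let L be a list assignment of G with |L(u_i)| ≥ 4 for every i with 2 ≤ i ≤ r−1. Suppose φ is a proper coloring of G′ with φ(v) ∈ L(v) for all v ∈ V(G′) such that either some color appears on exactly one vertex of N_{G′}(u₁), or all vertices of N_{G′}(u₁) receive the same color. Then φ can be extended to a proper coloring φ′ of G with φ′(u_i) ∈ L(u_i) for 2 ≤ i ≤ r−1 such that for every i with 1 ≤ i ≤ r−1, some color appears on exactly one vertex of N_G(u_i). -/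


noncomputable def earPick (A : Finset ℕ) (p q c : ℕ) : ℕ :=
  if h : (A \ {p, q, c}).Nonempty then (A \ {p, q, c}).min' h else 0

lemma earPick_spec {A : Finset ℕ} (hA : 4 ≤ A.card) (p q c : ℕ) :
    earPick A p q c ∈ A ∧ earPick A p q c ≠ p ∧ earPick A p q c ≠ q ∧
      earPick A p q c ≠ c := by
  have h3 : ({p, q, c} : Finset ℕ).card ≤ 3 := by
    apply le_trans (Finset.card_insert_le _ _)
    have := Finset.card_insert_le q ({c} : Finset ℕ)
    simp at this ⊢; omega
  have h1 : (A \ {p, q, c}).Nonempty := by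
    rw [← Finset.card_pos]
    have := Finset.le_card_sdiff ({p,q,c} : Finset ℕ) A
    omega
  have hm := Finset.min'_mem _ h1
  rw [Finset.mem_sdiff] at hm
  unfold earPick
  rw [dif_pos h1]
  obtain ⟨h1', h2'⟩ := hm
  simp only [Finset.mem_insert, Finset.mem_singleton] at h2'
  push_neg at h2'
  exact ⟨h1', h2'.1, h2'.2.1, h2'.2.2⟩

noncomputable def earCol (Ls : ℕ → Finset ℕ) (c0 cr a0 m : ℕ) : ℕ → ℕ
  | 0 => a0
  | 1 => if 1 ≤ m then earPick (Ls 1) a0 c0 cr else cr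
  | (i+2) => if i+2 ≤ m then
      earPick (Ls (i+2)) (earCol Ls c0 cr a0 m (i+1)) (earCol Ls c0 cr a0 m i) cr
    else cr

/-- Ear extension lemma. Let `G` be a simple graph containing an ear
`u₁u₂⋯u_ru₁` (here `0`-indexed as `u ⟨0, by omega⟩, u 1, …, u (r-1)`, so `u₁ = u ⟨0, by omega⟩` and
`u_r = u (r-1)`): the `u i` are distinct, consecutive ones (cyclically) are
adjacent, and the internal vertices `u i` (`i ≠ 0`, `i ≠ r-1`) have degree `2`
in `G`. Let `S = V(G') = V(G) \ {u₂, …, u_{r-1}}` and let `L` assign lists of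
size at least `4` to the internal vertices. Suppose `φ` is a proper coloring of
`G' = G - {u₂, …, u_{r-1}}` with colors from the lists such that either some
color appears on exactly one vertex of `N_{G'}(u₁)`, or all vertices of
`N_{G'}(u₁)` receive the same color. Then `φ` extends to a proper coloring `φ'`
of `G` with `φ'(u_i) ∈ L(u_i)` for internal `i`, such that every `u_i` with
`1 ≤ i ≤ r - 1` has a color appearing on exactly one of its `G`-neighbors. -/
theorem ear_extension {V : Type*} (G : SimpleGraph V) (r : ℕ) (hr : 3 ≤ r)
    (u : Fin r → V) (hinj : Function.Injective u)
    (hcyc : ∀ i : Fin r, G.Adj (u i) (u ⟨(i.val + 1) % r, Nat.mod_lt _ (by omega)⟩))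
    (hdeg : ∀ i : Fin r, i.val ≠ 0 → i.val ≠ r - 1 →
      (G.neighborSet (u i)).ncard = 2)
    (L : V → Finset ℕ)
    (hL : ∀ i : Fin r, i.val ≠ 0 → i.val ≠ r - 1 → 4 ≤ (L (u i)).card)
    (S : Set V)
    (hS : S = {v : V | ∀ i : Fin r, i.val ≠ 0 → i.val ≠ r - 1 → v ≠ u i})
    (φ : V → ℕ)
    (hproper : ∀ a ∈ S, ∀ b ∈ S, G.Adj a b → φ a ≠ φ b)
    (hlist : ∀ a ∈ S, φ a ∈ L a)
    (hu1 : (∃ c : ℕ, ∃! w : V, (w ∈ S ∧ G.Adj (u ⟨0, by omega⟩) w) ∧ φ w = c) ∨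
      (∀ w ∈ S, ∀ w' ∈ S, G.Adj (u ⟨0, by omega⟩) w → G.Adj (u ⟨0, by omega⟩) w' → φ w = φ w')) :
    ∃ φ' : V → ℕ,
      (∀ a ∈ S, φ' a = φ a) ∧
      (∀ i : Fin r, i.val ≠ 0 → i.val ≠ r - 1 → φ' (u i) ∈ L (u i)) ∧
      (∀ ⦃a b : V⦄, G.Adj a b → φ' a ≠ φ' b) ∧
      (∀ i : Fin r, i.val ≠ r - 1 →
        ∃ c : ℕ, ∃! w : V, G.Adj (u i) w ∧ φ' w = c) := by
  classical
  have hrpos : 0 < r := by omega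
  set U : ℕ → V := fun i => u ⟨i % r, Nat.mod_lt _ hrpos⟩ with hUdef
  have hUk : ∀ k (hk : k < r), U k = u ⟨k, hk⟩ := by
    intro k hk
    simp only [hUdef]
    congr 1
    exact Fin.ext (Nat.mod_eq_of_lt hk)
  have hUeq : ∀ i : Fin r, u i = U i.val := by
    intro i
    rw [hUk i.val i.isLt]
  have hadj : ∀ i, G.Adj (U i) (U (i + 1)) := by
    intro i
    have h := hcyc ⟨i % r, Nat.mod_lt _ hrpos⟩
    have e2 : U (i + 1) = u ⟨(i % r + 1) % r, Nat.mod_lt _ hrpos⟩ := by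
      simp only [hUdef]
      congr 1
      exact Fin.ext (by simp [Nat.mod_add_mod])
    rw [e2]
    exact h
  have hUinj : ∀ i j, i < r → j < r → U i = U j → i = j := by
    intro i j hi hj h
    have h2 : (⟨i % r, Nat.mod_lt _ hrpos⟩ : Fin r) = ⟨j % r, Nat.mod_lt _ hrpos⟩ := hinj h
    have h3 : i % r = j % r := congrArg Fin.val h2
    rwa [Nat.mod_eq_of_lt hi, Nat.mod_eq_of_lt hj] at h3
  have hSmem : ∀ v, v ∈ S ↔ ∀ k, 1 ≤ k → k ≤ r - 2 → v ≠ U k := by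
    intro v
    rw [hS]
    simp only [Set.mem_setOf_eq]
    constructor
    · intro h k h1 h2
      rw [hUk k (by omega)]
      exact h ⟨k, by omega⟩ (show k ≠ 0 by omega) (show k ≠ r - 1 by omega)
    · intro h i hi0 hi1
      rw [hUeq i]
      exact h i.val (by omega) (by have := i.isLt; omega)
  have hnotS : ∀ v, v ∉ S → ∃ k, 1 ≤ k ∧ k ≤ r - 2 ∧ v = U k := by
    intro v hv
    rw [hSmem] at hv
    push_neg at hv
    obtain ⟨k, h1, h2, h3⟩ := hv
    exact ⟨k, h1, h2, h3⟩
  have hU0S : U 0 ∈ S := by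
    rw [hSmem]
    intro k h1 h2 he
    have := hUinj 0 k (by omega) (by omega) he
    omega
  have hUr1S : U (r - 1) ∈ S := by
    rw [hSmem]
    intro k h1 h2 he
    have := hUinj (r - 1) k (by omega) (by omega) he
    omega
  have hnbr : ∀ k, 1 ≤ k → k ≤ r - 2 → ∀ w, G.Adj (U k) w →
      w = U (k - 1) ∨ w = U (k + 1) := by
    intro k h1 h2 w hw
    have hd : (G.neighborSet (U k)).ncard = 2 := by
      rw [hUk k (by omega)]
      exact hdeg ⟨k, by omega⟩ (show k ≠ 0 by omega) (show k ≠ r - 1 by omega)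
    have hfin : (G.neighborSet (U k)).Finite := by
      by_contra h
      have := Set.Infinite.ncard h
      omega
    have hmem1 : U (k + 1) ∈ G.neighborSet (U k) := hadj k
    have hmem2 : U (k - 1) ∈ G.neighborSet (U k) := by
      have h := (hadj (k - 1)).symm
      rwa [show k - 1 + 1 = k by omega] at h
    have hne : U (k - 1) ≠ U (k + 1) := by
      intro h
      have := hUinj (k - 1) (k + 1) (by omega) (by omega) h
      omega
    have hpair : ({U (k - 1), U (k + 1)} : Set V) ⊆ G.neighborSet (U k) := by
      intro x hx
      rcases hx with rfl | hx
      · exact hmem2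
      · rw [Set.mem_singleton_iff] at hx
        subst hx
        exact hmem1
    have heq : ({U (k - 1), U (k + 1)} : Set V) = G.neighborSet (U k) :=
      Set.eq_of_subset_of_ncard_le hpair (by rw [hd, Set.ncard_pair hne]) hfin
    have hw' : w ∈ G.neighborSet (U k) := hw
    rw [← heq] at hw'
    simpa using hw'
  have hadjr : G.Adj (U 0) (U (r - 1)) := by
    have h := (hadj (r - 1)).symm
    have e : U (r - 1 + 1) = U 0 := by
      simp only [hUdef]
      congr 1
      exact Fin.ext (by simp [show r - 1 + 1 = r by omega])
    rwa [e] at h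
  have h0r : φ (U 0) ≠ φ (U (r - 1)) := hproper (U 0) hU0S (U (r - 1)) hUr1S hadjr
  -- pick c0
  obtain ⟨c0, hc0⟩ : ∃ c0 : ℕ,
      (∃! w : V, (w ∈ S ∧ G.Adj (u ⟨0, hrpos⟩) w) ∧ φ w = c0) ∨
      ((∀ w ∈ S, ∀ w' ∈ S, G.Adj (u ⟨0, hrpos⟩) w → G.Adj (u ⟨0, hrpos⟩) w' → φ w = φ w') ∧
        c0 = φ (U (r - 1))) := by
    rcases hu1 with ⟨c, hc⟩ | hall
    · exact ⟨c, Or.inl hc⟩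
    · exact ⟨φ (U (r - 1)), Or.inr ⟨hall, rfl⟩⟩
  set col : ℕ → ℕ := earCol (fun i => L (U i)) c0 (φ (U (r - 1))) (φ (U 0)) (r - 2)
    with hcoldef
  have hcol0 : col 0 = φ (U 0) := rfl
  have hcolbig : ∀ i, r - 2 < i → col i = φ (U (r - 1)) := by
    intro i hi
    rcases i with _ | _ | j
    · omega
    · exact absurd hi (by omega)
    · simp only [hcoldef, earCol]
      rw [if_neg (by omega)]
  have hLs : ∀ k, 1 ≤ k → k ≤ r - 2 → 4 ≤ (L (U k)).card := by
    intro k h1 h2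
    have h := hL ⟨k, by omega⟩ (show k ≠ 0 by omega) (show k ≠ r - 1 by omega)
    rwa [hUk k (by omega)]
  have hcolspec : ∀ k, 1 ≤ k → k ≤ r - 2 →
      col k ∈ L (U k) ∧ col k ≠ col (k - 1) ∧
      col k ≠ (if k = 1 then c0 else col (k - 2)) ∧ col k ≠ φ (U (r - 1)) := by
    intro k h1 h2
    rcases eq_or_ne k 1 with rfl | hk1
    · have he : col 1 = earPick (L (U 1)) (φ (U 0)) c0 (φ (U (r - 1))) := by
        simp only [hcoldef, earCol]
        rw [if_pos (by omega)]
      obtain ⟨s1, s2, s3, s4⟩ := earPick_spec (hLs 1 le_rfl (by omega)) (φ (U 0)) c0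
        (φ (U (r - 1)))
      rw [he]
      refine ⟨s1, ?_, ?_, s4⟩
      · rw [show (1 : ℕ) - 1 = 0 from rfl, hcol0]
        exact s2
      · rw [if_pos rfl]
        exact s3
    · obtain ⟨j, rfl⟩ : ∃ j, k = j + 2 := ⟨k - 2, by omega⟩
      have he : col (j + 2) = earPick (L (U (j + 2))) (col (j + 1)) (col j)
          (φ (U (r - 1))) := by
        simp only [hcoldef, earCol]
        rw [if_pos (by omega)]
      obtain ⟨s1, s2, s3, s4⟩ := earPick_spec (hLs (j + 2) (by omega) h2) (col (j + 1))
        (col j) (φ (U (r - 1)))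
      rw [he]
      refine ⟨s1, ?_, ?_, s4⟩
      · rw [show j + 2 - 1 = j + 1 from rfl]
        exact s2
      · rw [if_neg (by omega), show j + 2 - 2 = j from rfl]
        exact s3
  set φ' : V → ℕ := fun v =>
    if h : ∃ i : Fin r, v = u i then col (Classical.choose h).val else φ v with hφ'def
  have hφ'u : ∀ i : Fin r, φ' (u i) = col i.val := by
    intro i
    have h : ∃ j : Fin r, u i = u j := ⟨i, rfl⟩
    have he : φ' (u i) = col (Classical.choose h).val := by
      simp only [hφ'def]
      rw [dif_pos h]
    rw [he, ← hinj (Classical.choose_spec h)]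
  have hφ'U : ∀ k, k < r → φ' (U k) = col k := by
    intro k hk
    rw [hUk k hk]
    exact hφ'u ⟨k, hk⟩
  have hφ'S : ∀ a ∈ S, φ' a = φ a := by
    intro a ha
    by_cases h : ∃ i : Fin r, a = u i
    · obtain ⟨i, rfl⟩ := h
      rw [hφ'u i]
      by_cases h0 : i.val = 0
      · rw [h0, hcol0, hUeq i, h0]
      · by_cases h1 : i.val = r - 1
        · rw [h1, hcolbig (r - 1) (by omega), hUeq i, h1]
        · exact absurd (hUeq i) ((hSmem _).mp ha i.val (by omega) (by have := i.isLt; omega))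
    · simp only [hφ'def]
      rw [dif_neg h]
  have hint : ∀ a b, G.Adj a b → a ∉ S → φ' a ≠ φ' b := by
    intro a b hab ha
    obtain ⟨k, h1, h2, rfl⟩ := hnotS a ha
    rcases hnbr k h1 h2 b hab with rfl | rfl
    · rw [hφ'U k (by omega), hφ'U (k - 1) (by omega)]
      exact (hcolspec k h1 h2).2.1
    · rw [hφ'U k (by omega), hφ'U (k + 1) (by omega)]
      by_cases h3 : k + 1 ≤ r - 2
      · have := (hcolspec (k + 1) (by omega) h3).2.1
        rw [show k + 1 - 1 = k from rfl] at this
        exact this.symm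
      · rw [hcolbig (k + 1) (by omega)]
        exact (hcolspec k h1 h2).2.2.2
  have hproper' : ∀ a b : V, G.Adj a b → φ' a ≠ φ' b := by
    intro a b hab
    by_cases ha : a ∈ S
    · by_cases hb : b ∈ S
      · rw [hφ'S a ha, hφ'S b hb]
        exact hproper a ha b hb hab
      · exact (hint b a hab.symm hb).symm
    · exact hint a b hab ha
  refine ⟨φ', hφ'S, ?_, fun a b hab => hproper' a b hab, ?_⟩
  · intro i hi0 hi1
    rw [hφ'u i, hUeq i]
    exact (hcolspec i.val (by omega) (by have := i.isLt; omega)).1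
  · intro i hi1
    by_cases hi0 : i.val = 0
    · have hu0 : u i = U 0 := by rw [hUeq i, hi0]
      rcases hc0 with ⟨w0, ⟨⟨hw0S, hw0adj⟩, hw0c⟩, huniq⟩ | ⟨hall, hc0cr⟩
      · refine ⟨c0, w0, ⟨?_, ?_⟩, ?_⟩
        · rw [hu0]
          rwa [← hUk 0 hrpos] at hw0adj
        · rw [hφ'S w0 hw0S]
          exact hw0c
        · rintro w' ⟨hadj', hcol'⟩
          have hadjU : G.Adj (U 0) w' := by rw [← hu0]; exact hadj'
          by_cases hw'S : w' ∈ S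
          · refine huniq w' ⟨⟨hw'S, ?_⟩, ?_⟩
            · rwa [hUk 0 hrpos] at hadjU
            · rw [← hφ'S w' hw'S]
              exact hcol'
          · exfalso
            obtain ⟨j, hj1, hj2, rfl⟩ := hnotS w' hw'S
            rcases hnbr j hj1 hj2 (U 0) hadjU.symm with he | he
            · have hj : j = 1 := by
                have := hUinj 0 (j - 1) (by omega) (by omega) he
                omega
              subst hj
              rw [hφ'U 1 (by omega)] at hcol'
              have := (hcolspec 1 le_rfl (by omega)).2.2.1
              rw [if_pos rfl] at this
              exact this hcol'
            · have := hUinj 0 (j + 1) (by omega) (by omega) he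
              omega
      · refine ⟨col 1, U 1, ⟨?_, hφ'U 1 (by omega)⟩, ?_⟩
        · rw [hu0]
          exact hadj 0
        · rintro w' ⟨hadj', hcol'⟩
          have hadjU : G.Adj (U 0) w' := by rw [← hu0]; exact hadj'
          by_cases hw'S : w' ∈ S
          · exfalso
            have hadj0 : G.Adj (u ⟨0, hrpos⟩) w' := by rwa [hUk 0 hrpos] at hadjU
            have hadjr' : G.Adj (u ⟨0, hrpos⟩) (U (r - 1)) := by
              rwa [hUk 0 hrpos] at hadjr
            have h1 : φ w' = φ (U (r - 1)) := hall w' hw'S (U (r - 1)) hUr1S hadj0 hadjr'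
            rw [hφ'S w' hw'S, h1] at hcol'
            exact (hcolspec 1 le_rfl (by omega)).2.2.2 hcol'.symm
          · obtain ⟨j, hj1, hj2, rfl⟩ := hnotS w' hw'S
            rcases hnbr j hj1 hj2 (U 0) hadjU.symm with he | he
            · have hj : j = 1 := by
                have := hUinj 0 (j - 1) (by omega) (by omega) he
                omega
              rw [hj]
            · exfalso
              have := hUinj 0 (j + 1) (by omega) (by omega) he
              omega
    · have hk1 : 1 ≤ i.val := by omega
      have hk2 : i.val ≤ r - 2 := by have := i.isLt; omega
      refine ⟨col (i.val + 1), U (i.val + 1), ⟨?_, hφ'U (i.val + 1) (by omega)⟩, ?_⟩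
      · rw [hUeq i]
        exact hadj i.val
      · rintro w' ⟨hadj', hcol'⟩
        rw [hUeq i] at hadj'
        rcases hnbr i.val hk1 hk2 w' hadj' with rfl | rfl
        · exfalso
          rw [hφ'U (i.val - 1) (by omega)] at hcol'
          by_cases h3 : i.val + 1 ≤ r - 2
          · have := (hcolspec (i.val + 1) (by omega) h3).2.2.1
            rw [if_neg (by omega), show i.val + 1 - 2 = i.val - 1 by omega] at this
            exact this hcol'.symm
          · rw [hcolbig (i.val + 1) (by omega)] at hcol'
            by_cases hk0 : i.val = 1
            · rw [hk0, show (1 : ℕ) - 1 = 0 from rfl, hcol0] at hcol'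
              exact h0r hcol'
            · exact (hcolspec (i.val - 1) (by omega) (by omega)).2.2.2 hcol'
        · rfl
end

section
/- Let H be a connected simple graph, let v₀ be a vertex of H of degree d, and for each i ∈ {1, …, d+1} let C⁽ⁱ⁾ = v₀ⁱv₁ⁱv₂ⁱv₃ⁱv₀ⁱ be a cycle of length 4, the cycles being pairwise disjoint and disjoint from H. Let G be the graph obtained from H and C⁽¹⁾, …, C⁽ᵈ⁺¹⁾ by identifying v₀ and v₀¹, …, v₀^{d+1} into a single vertex v. Then G is a connected graph containing H as an induced subgraph, and G is not proper conflict-free (degree+1)-choosable; that is, there exists a list assignment L of G with |L(u)| ≥ d_G(u)+1 for every vertex u such that G admits no proper conflict-free L-coloring. -/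
/-- The graph obtained from `H` and `d + 1` pairwise disjoint `4`-cycles
`C⁽ⁱ⁾ = v₀ⁱv₁ⁱv₂ⁱv₃ⁱv₀ⁱ` by identifying `v₀` and `v₀¹, …, v₀^{d+1}` into a
single vertex `v = Sum.inl v₀`. The new vertices `v_j^i` (`j = 1, 2, 3`) are
`Sum.inr (i, j - 1)`, and the `i`-th `4`-cycle is
`v — (i,0) — (i,1) — (i,2) — v`. -/
def attachFourCycles {V : Type*} (H : SimpleGraph V) (v₀ : V) (d : ℕ) :
    SimpleGraph (V ⊕ Fin (d + 1) × Fin 3) :=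
  SimpleGraph.fromRel fun a b =>
    (∃ x y : V, a = Sum.inl x ∧ b = Sum.inl y ∧ H.Adj x y) ∨
    (∃ i : Fin (d + 1), a = Sum.inl v₀ ∧ (b = Sum.inr (i, 0) ∨ b = Sum.inr (i, 2))) ∨
    (∃ i : Fin (d + 1), (a = Sum.inr (i, 0) ∧ b = Sum.inr (i, 1)) ∨
      (a = Sum.inr (i, 1) ∧ b = Sum.inr (i, 2)))

section aux
variable {V : Type*} {H : SimpleGraph V} {v₀ : V} {d : ℕ}

lemma afc_adj_v0 (i : Fin (d+1)) :
    (attachFourCycles H v₀ d).Adj (Sum.inl v₀) (Sum.inr (i,0)) := by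
  simp [attachFourCycles, SimpleGraph.fromRel_adj]

lemma afc_adj_v2 (i : Fin (d+1)) :
    (attachFourCycles H v₀ d).Adj (Sum.inl v₀) (Sum.inr (i,2)) := by
  simp [attachFourCycles, SimpleGraph.fromRel_adj]

lemma afc_adj_01 (i : Fin (d+1)) :
    (attachFourCycles H v₀ d).Adj (Sum.inr (i,0)) (Sum.inr (i,1)) := by
  simp [attachFourCycles, SimpleGraph.fromRel_adj]

lemma afc_adj_12 (i : Fin (d+1)) :
    (attachFourCycles H v₀ d).Adj (Sum.inr (i,1)) (Sum.inr (i,2)) := by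
  simp [attachFourCycles, SimpleGraph.fromRel_adj]

lemma afc_adj_inl_inl {x y : V} :
    (attachFourCycles H v₀ d).Adj (Sum.inl x) (Sum.inl y) ↔ H.Adj x y := by
  constructor
  · rintro ⟨hne, h | h⟩ <;>
      rcases h with ⟨x', y', hx, hy, hadj⟩ | ⟨i, hx, hb⟩ | ⟨i, ⟨hx, hb⟩ | ⟨hx, hb⟩⟩ <;>
      simp_all <;> exact hadj.symm
  · intro h
    exact ⟨fun he => H.irrefl ((Sum.inl.injEq _ _ ▸ he : x = y) ▸ h),
      Or.inl (Or.inl ⟨x, y, rfl, rfl, h⟩)⟩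

lemma afc_ns0 (i : Fin (d+1)) :
    (attachFourCycles H v₀ d).neighborSet (Sum.inr (i,0)) = {Sum.inl v₀, Sum.inr (i,1)} := by
  ext u
  constructor
  · rintro ⟨hne, h | h⟩ <;>
      rcases h with ⟨x', y', hx, hy, hadj⟩ | ⟨j, hx, hb | hb⟩ | ⟨j, ⟨hx, hb⟩ | ⟨hx, hb⟩⟩ <;>
      simp_all
  · rintro (rfl | rfl)
    · exact (afc_adj_v0 i).symm
    · exact afc_adj_01 i

lemma afc_ns1 (i : Fin (d+1)) :
    (attachFourCycles H v₀ d).neighborSet (Sum.inr (i,1)) = {Sum.inr (i,0), Sum.inr (i,2)} := by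
  ext u
  constructor
  · rintro ⟨hne, h | h⟩ <;>
      rcases h with ⟨x', y', hx, hy, hadj⟩ | ⟨j, hx, hb | hb⟩ | ⟨j, ⟨hx, hb⟩ | ⟨hx, hb⟩⟩ <;>
      simp_all
  · rintro (rfl | rfl)
    · exact (afc_adj_01 i).symm
    · exact afc_adj_12 i

lemma afc_ns2 (i : Fin (d+1)) :
    (attachFourCycles H v₀ d).neighborSet (Sum.inr (i,2)) = {Sum.inl v₀, Sum.inr (i,1)} := by
  ext u
  constructor
  · rintro ⟨hne, h | h⟩ <;>
      rcases h with ⟨x', y', hx, hy, hadj⟩ | ⟨j, hx, hb | hb⟩ | ⟨j, ⟨hx, hb⟩ | ⟨hx, hb⟩⟩ <;>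
      simp_all
  · rintro (rfl | rfl)
    · exact (afc_adj_v2 i).symm
    · exact (afc_adj_12 i).symm

lemma afc_nsv_sub :
    (attachFourCycles H v₀ d).neighborSet (Sum.inl v₀) ⊆
      (Sum.inl '' H.neighborSet v₀) ∪
      ((fun i : Fin (d+1) => (Sum.inr (i, 0) : V ⊕ Fin (d+1) × Fin 3)) '' Set.univ) ∪
      ((fun i : Fin (d+1) => (Sum.inr (i, 2) : V ⊕ Fin (d+1) × Fin 3)) '' Set.univ) := by
  rintro u ⟨hne, h | h⟩ <;>
    rcases h with ⟨x', y', hx, hy, hadj⟩ | ⟨j, hx, hb | hb⟩ | ⟨j, ⟨hx, hb⟩ | ⟨hx, hb⟩⟩ <;>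
    simp_all [Set.mem_image, SimpleGraph.mem_neighborSet]
  exact hadj.symm

lemma pcf_pair {W : Type*} {G : SimpleGraph W} {φ : W → ℕ} (h : IsPCFColoring G φ)
    {v x y : W} (hxy : x ≠ y) (hN : G.neighborSet v = {x, y}) : φ x ≠ φ y := by
  intro heq
  obtain ⟨c, w, ⟨hw, hwc⟩, huniq⟩ := h.2 v ⟨x, by rw [hN]; exact Set.mem_insert _ _⟩
  have hcx : φ x = c := by
    rw [hN] at hw
    rcases hw with rfl | hw
    · exact hwc
    · rw [Set.mem_singleton_iff] at hw; subst hw; exact heq.trans hwc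
  have h1 := huniq x ⟨by rw [hN]; exact Set.mem_insert _ _, hcx⟩
  have h2 := huniq y ⟨by rw [hN]; exact Set.mem_insert_of_mem _ rfl, heq ▸ hcx⟩
  exact hxy (h1.trans h2.symm)

end aux

/-- Let `H` be a connected graph, `v₀` a vertex of `H` of degree `d`, and let `G`
be obtained from `H` by attaching `d + 1` disjoint `4`-cycles at `v₀`. Then `G` is
connected, contains `H` as an induced subgraph (via `Sum.inl`), and `G` is not
proper conflict-free (degree+1)-choosable: there is a list assignment `L` with
`|L(u)| ≥ d_G(u) + 1` for every vertex `u` admitting no proper conflict-free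
`L`-coloring. -/
theorem attachFourCycles_not_pcf_degree_plus_one_choosable
    {V : Type*} [Fintype V] (H : SimpleGraph V) (hH : H.Connected)
    (v₀ : V) (d : ℕ) (hd : (H.neighborSet v₀).ncard = d) :
    (attachFourCycles H v₀ d).Connected ∧
    (∀ x y : V, (attachFourCycles H v₀ d).Adj (Sum.inl x) (Sum.inl y) ↔ H.Adj x y) ∧
    ∃ L : V ⊕ Fin (d + 1) × Fin 3 → Finset ℕ,
      (∀ u, ((attachFourCycles H v₀ d).neighborSet u).ncard + 1 ≤ (L u).card) ∧
      ¬ ∃ φ, IsPCFColoring (attachFourCycles H v₀ d) φ ∧ ∀ u, φ u ∈ L u := by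
  classical
  refine ⟨?_, fun x y => afc_adj_inl_inl, ?_⟩
  · -- connectedness
    have hreach : ∀ u, (attachFourCycles H v₀ d).Reachable u (Sum.inl v₀) := by
      intro u
      rcases u with x | ⟨i, j⟩
      · exact (hH.preconnected x v₀).map
          (⟨Sum.inl, fun h => afc_adj_inl_inl.mpr h⟩ :
            H →g attachFourCycles H v₀ d)
      · fin_cases j
        · exact (afc_adj_v0 i).symm.reachable
        · exact ((afc_adj_01 i).symm.reachable).trans ((afc_adj_v0 i).symm.reachable)
        · exact (afc_adj_v2 i).symm.reachable
    rw [SimpleGraph.connected_iff]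
    exact ⟨fun a b => (hreach a).trans (hreach b).symm,
      hH.nonempty.elim fun x => ⟨Sum.inl x⟩⟩
  · refine ⟨Sum.elim
      (fun x => if x = v₀ then (Finset.range (3*d+3)).image (·+1)
        else Finset.range (((attachFourCycles H v₀ d).neighborSet (Sum.inl x)).ncard + 1))
      (fun p => {3*(p.1:ℕ)+1, 3*(p.1:ℕ)+2, 3*(p.1:ℕ)+3}), ?_, ?_⟩
    · -- card bounds
      intro u
      rcases u with x | ⟨i, j⟩
      · by_cases hx : x = v₀
        · subst hx
          simp only [Sum.elim_inl, eq_self_iff_true, if_true]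
          rw [Finset.card_image_of_injective _ (add_left_injective 1), Finset.card_range]
          have h1 := Set.ncard_le_ncard (afc_nsv_sub (H := H) (v₀ := x) (d := d))
            (Set.toFinite _)
          have h2 := Set.ncard_union_le
            ((Sum.inl '' H.neighborSet x) ∪
              ((fun i : Fin (d+1) => (Sum.inr (i, 0) : V ⊕ Fin (d+1) × Fin 3)) '' Set.univ))
            ((fun i : Fin (d+1) => (Sum.inr (i, 2) : V ⊕ Fin (d+1) × Fin 3)) '' Set.univ)
          have h3 := Set.ncard_union_le (Sum.inl '' H.neighborSet x)
            ((fun i : Fin (d+1) => (Sum.inr (i, 0) : V ⊕ Fin (d+1) × Fin 3)) '' Set.univ)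
          have h4 := Set.ncard_image_le (f := (Sum.inl : V → V ⊕ Fin (d+1) × Fin 3)) (s := H.neighborSet x)
            (Set.toFinite _)
          have h5 := Set.ncard_image_le
            (f := fun i : Fin (d+1) => (Sum.inr (i, 0) : V ⊕ Fin (d+1) × Fin 3))
            (s := Set.univ) (Set.toFinite _)
          have h6 := Set.ncard_image_le
            (f := fun i : Fin (d+1) => (Sum.inr (i, 2) : V ⊕ Fin (d+1) × Fin 3))
            (s := Set.univ) (Set.toFinite _)
          have h7 : (Set.univ : Set (Fin (d+1))).ncard = d + 1 := by
            rw [Set.ncard_univ, Nat.card_eq_fintype_card, Fintype.card_fin]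
          omega
        · simp [hx, Finset.card_range]
      · have hcard : ({3*(i:ℕ)+1, 3*(i:ℕ)+2, 3*(i:ℕ)+3} : Finset ℕ).card = 3 := by
          rw [Finset.card_insert_of_notMem (by simp),
            Finset.card_insert_of_notMem (by simp), Finset.card_singleton]
        have hj : j = 0 ∨ j = 1 ∨ j = 2 := by fin_cases j <;> simp
        rcases hj with rfl | rfl | rfl
        · rw [afc_ns0 i]
          simp only [Sum.elim_inr]
          rw [Set.ncard_pair (by simp), hcard]
        · rw [afc_ns1 i]
          simp only [Sum.elim_inr]
          rw [Set.ncard_pair (by simp), hcard]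
        · rw [afc_ns2 i]
          simp only [Sum.elim_inr]
          rw [Set.ncard_pair (by simp), hcard]
    · -- no PCF coloring
      rintro ⟨φ, hφ, hmem⟩
      have hv := hmem (Sum.inl v₀)
      simp only [Sum.elim_inl, eq_self_iff_true, if_true, Finset.mem_image, Finset.mem_range] at hv
      obtain ⟨k, hk, hkv⟩ := hv
      have hklt : k < 3 * (d + 1) := by omega
      set i : Fin (d+1) := ⟨k / 3, by omega⟩ with hi
      have hiv : (i : ℕ) = k / 3 := rfl
      have ha := hmem (Sum.inr (i, 0))
      have hb := hmem (Sum.inr (i, 1))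
      have hc := hmem (Sum.inr (i, 2))
      simp only [Sum.elim_inr, Finset.mem_insert, Finset.mem_singleton] at ha hb hc
      have hva : φ (Sum.inl v₀) ≠ φ (Sum.inr (i, 0)) := hφ.1 (afc_adj_v0 i)
      have hvc : φ (Sum.inl v₀) ≠ φ (Sum.inr (i, 2)) := hφ.1 (afc_adj_v2 i)
      have hab : φ (Sum.inr (i, 0)) ≠ φ (Sum.inr (i, 1)) := hφ.1 (afc_adj_01 i)
      have hbc : φ (Sum.inr (i, 1)) ≠ φ (Sum.inr (i, 2)) := hφ.1 (afc_adj_12 i)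
      have hac : φ (Sum.inr (i, 0)) ≠ φ (Sum.inr (i, 2)) :=
        pcf_pair hφ (by simp) (afc_ns1 i)
      have hvb : φ (Sum.inl v₀) ≠ φ (Sum.inr (i, 1)) :=
        pcf_pair hφ (by simp) (afc_ns0 i)
      omega
end

section
/- Let ℓ₁ ≥ 4 and ℓ₂ ≥ 4 be integers with ℓ₁ ≡ 1 (mod 3) and ℓ₂ ≡ 1 (mod 3). Then the theta graph Θ_{1,ℓ₁,ℓ₂} is not proper conflict-free (degree+1)-choosable; that is, there exists a list assignment L of Θ_{1,ℓ₁,ℓ₂} with |L(v)| ≥ d(v)+1 for every vertex v such that Θ_{1,ℓ₁,ℓ₂} admits no proper conflict-free L-coloring. -/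
/-- The theta graph `Θ_{1,ℓ₁,ℓ₂}`: the two hub vertices are `Sum.inl 0 = v₁` and
`Sum.inl 1 = v₂`, joined by three internally disjoint paths: the edge `v₁v₂`
(length `1`), the path `v₁ u₀ u₁ ⋯ u_{ℓ₁-2} v₂` of length `ℓ₁` whose internal
vertices are `Sum.inr (Sum.inl i)` for `i : Fin (ℓ₁ - 1)`, and the path
`v₁ w₀ w₁ ⋯ w_{ℓ₂-2} v₂` of length `ℓ₂` whose internal vertices are
`Sum.inr (Sum.inr j)` for `j : Fin (ℓ₂ - 1)`. -/
def thetaOneGraph (ℓ₁ ℓ₂ : ℕ) :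
    SimpleGraph (Fin 2 ⊕ (Fin (ℓ₁ - 1) ⊕ Fin (ℓ₂ - 1))) :=
  SimpleGraph.fromRel fun a b =>
    (a = Sum.inl 0 ∧ b = Sum.inl 1) ∨
    (∃ i : Fin (ℓ₁ - 1), i.val = 0 ∧ a = Sum.inl 0 ∧ b = Sum.inr (Sum.inl i)) ∨
    (∃ i j : Fin (ℓ₁ - 1), j.val = i.val + 1 ∧
      a = Sum.inr (Sum.inl i) ∧ b = Sum.inr (Sum.inl j)) ∨
    (∃ i : Fin (ℓ₁ - 1), i.val = ℓ₁ - 2 ∧ a = Sum.inr (Sum.inl i) ∧ b = Sum.inl 1) ∨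
    (∃ j : Fin (ℓ₂ - 1), j.val = 0 ∧ a = Sum.inl 0 ∧ b = Sum.inr (Sum.inr j)) ∨
    (∃ i j : Fin (ℓ₂ - 1), j.val = i.val + 1 ∧
      a = Sum.inr (Sum.inr i) ∧ b = Sum.inr (Sum.inr j)) ∨
    (∃ j : Fin (ℓ₂ - 1), j.val = ℓ₂ - 2 ∧ a = Sum.inr (Sum.inr j) ∧ b = Sum.inl 1)

namespace ThetaAux

open Sum

lemma ncard_le_two' {V : Type*} (s : Set V) (x y : V) (h : s ⊆ {x, y}) : s.ncard ≤ 2 := by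
  have h1 := Set.ncard_le_ncard h (Set.toFinite _)
  have h2 : ({x, y} : Set V).ncard ≤ 2 := by
    have := Set.ncard_insert_le x ({y} : Set V)
    simpa using this
  omega

lemma ncard_le_three' {V : Type*} (s : Set V) (x y z : V) (h : s ⊆ {x, y, z}) :
    s.ncard ≤ 3 := by
  have h1 := Set.ncard_le_ncard h (Set.toFinite _)
  have h2 : ({x, y, z} : Set V).ncard ≤ 3 := by
    have a1 := Set.ncard_insert_le x ({y, z} : Set V)
    have a2 := Set.ncard_insert_le y ({z} : Set V)
    simp at a2
    omega
  omega

lemma cf_two {V : Type*} {G : SimpleGraph V} {φ : V → ℕ} (h : IsPCFColoring G φ)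
    {v x y : V} (hx : G.Adj v x) (hy : G.Adj v y) (hxy : x ≠ y)
    (hsub : ∀ w, G.Adj v w → w = x ∨ w = y) : φ x ≠ φ y := by
  obtain ⟨c, w, ⟨hw, hwc⟩, huniq⟩ := h.2 v ⟨x, hx⟩
  intro he
  rw [SimpleGraph.mem_neighborSet] at hw
  rcases hsub w hw with rfl | rfl
  · exact hxy (huniq y ⟨hy, by rw [← he]; exact hwc⟩).symm
  · exact hxy (huniq x ⟨hx, by rw [he]; exact hwc⟩)

lemma cf_three {V : Type*} {G : SimpleGraph V} {φ : V → ℕ} (h : IsPCFColoring G φ)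
    {v x y z : V} (hx : G.Adj v x) (hy : G.Adj v y) (hz : G.Adj v z)
    (hxy : x ≠ y) (hxz : x ≠ z)
    (hsub : ∀ w, G.Adj v w → w = x ∨ w = y ∨ w = z)
    (e1 : φ x = φ y) (e2 : φ x = φ z) : False := by
  obtain ⟨c, w, ⟨hw, hwc⟩, huniq⟩ := h.2 v ⟨x, hx⟩
  rw [SimpleGraph.mem_neighborSet] at hw
  rcases hsub w hw with rfl | rfl | rfl
  · exact hxy (huniq y ⟨hy, by rw [← e1]; exact hwc⟩).symm
  · exact hxy (huniq x ⟨hx, by rw [e1]; exact hwc⟩)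
  · exact hxz (huniq x ⟨hx, by rw [e2]; exact hwc⟩)

lemma period_lemma (n : ℕ) (a : ℕ → ℕ)
    (P1 : ∀ k, k + 1 < n → a k ≠ a (k + 1))
    (P2 : ∀ k, k + 2 < n → a k ≠ a (k + 2))
    (P3 : ∀ k, k < n → a k = 1 ∨ a k = 2 ∨ a k = 3) :
    ∀ k, k < n → a k = a (k % 3) := by
  intro k
  induction k using Nat.strong_induction_on with
  | _ k ih =>
    intro hk
    rcases lt_or_ge k 3 with h3 | h3
    · rw [Nat.mod_eq_of_lt h3]
    · have e1 := P1 (k - 3) (by omega)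
      have e2 := P1 (k - 2) (by omega)
      have e3 := P1 (k - 1) (by omega)
      have e4 := P2 (k - 3) (by omega)
      have e5 := P2 (k - 2) (by omega)
      have m0 := P3 (k - 3) (by omega)
      have m1 := P3 (k - 2) (by omega)
      have m2 := P3 (k - 1) (by omega)
      have m3 := P3 k (by omega)
      have h32 : k - 3 + 1 = k - 2 := by omega
      have h21 : k - 2 + 1 = k - 1 := by omega
      have h10 : k - 1 + 1 = k := by omega
      have h31 : k - 3 + 2 = k - 1 := by omega
      have h20 : k - 2 + 2 = k := by omega
      rw [h32] at e1; rw [h21] at e2; rw [h10] at e3; rw [h31] at e4; rw [h20] at e5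
      have key : a k = a (k - 3) := by omega
      have := ih (k - 3) (by omega) (by omega)
      rw [key, this]
      congr 1
      omega

variable {ℓ₁ ℓ₂ : ℕ}

local notation "G" => thetaOneGraph ℓ₁ ℓ₂

lemma adj_hub : (G).Adj (inl 0) (inl 1) := by
  rw [thetaOneGraph, SimpleGraph.fromRel_adj]
  exact ⟨by simp, Or.inl (Or.inl ⟨rfl, rfl⟩)⟩

lemma adj_u0 (i : Fin (ℓ₁ - 1)) (hi : i.val = 0) : (G).Adj (inl 0) (inr (inl i)) := by
  rw [thetaOneGraph, SimpleGraph.fromRel_adj]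
  exact ⟨by simp, Or.inl (Or.inr (Or.inl ⟨i, hi, rfl, rfl⟩))⟩

lemma adj_uu (i j : Fin (ℓ₁ - 1)) (hij : j.val = i.val + 1) :
    (G).Adj (inr (inl i)) (inr (inl j)) := by
  rw [thetaOneGraph, SimpleGraph.fromRel_adj]
  refine ⟨by simp only [ne_eq, Sum.inr.injEq, Sum.inl.injEq, Fin.ext_iff]; omega, Or.inl ?_⟩
  exact Or.inr (Or.inr (Or.inl ⟨i, j, hij, rfl, rfl⟩))

lemma adj_ul (i : Fin (ℓ₁ - 1)) (hi : i.val = ℓ₁ - 2) :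
    (G).Adj (inr (inl i)) (inl 1) := by
  rw [thetaOneGraph, SimpleGraph.fromRel_adj]
  exact ⟨by simp, Or.inl (Or.inr (Or.inr (Or.inr (Or.inl ⟨i, hi, rfl, rfl⟩))))⟩

lemma adj_w0 (j : Fin (ℓ₂ - 1)) (hj : j.val = 0) : (G).Adj (inl 0) (inr (inr j)) := by
  rw [thetaOneGraph, SimpleGraph.fromRel_adj]
  refine ⟨by simp, Or.inl ?_⟩
  exact Or.inr (Or.inr (Or.inr (Or.inr (Or.inl ⟨j, hj, rfl, rfl⟩))))

lemma adj_ww (i j : Fin (ℓ₂ - 1)) (hij : j.val = i.val + 1) :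
    (G).Adj (inr (inr i)) (inr (inr j)) := by
  rw [thetaOneGraph, SimpleGraph.fromRel_adj]
  refine ⟨by simp only [ne_eq, Sum.inr.injEq, Fin.ext_iff]; omega, Or.inl ?_⟩
  exact Or.inr (Or.inr (Or.inr (Or.inr (Or.inr (Or.inl ⟨i, j, hij, rfl, rfl⟩)))))

lemma adj_wl (j : Fin (ℓ₂ - 1)) (hj : j.val = ℓ₂ - 2) :
    (G).Adj (inr (inr j)) (inl 1) := by
  rw [thetaOneGraph, SimpleGraph.fromRel_adj]
  refine ⟨by simp, Or.inl ?_⟩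
  exact Or.inr (Or.inr (Or.inr (Or.inr (Or.inr (Or.inr ⟨j, hj, rfl, rfl⟩)))))

lemma nbrs_hub0 (x) (h : (G).Adj (inl 0) x) :
    x = inl 1 ∨ (∃ i : Fin (ℓ₁ - 1), i.val = 0 ∧ x = inr (inl i)) ∨
      (∃ j : Fin (ℓ₂ - 1), j.val = 0 ∧ x = inr (inr j)) := by
  rw [thetaOneGraph, SimpleGraph.fromRel_adj] at h
  obtain ⟨hne, h | h⟩ := h <;>
    rcases h with ⟨ha, hb⟩ | ⟨i, hi, ha, hb⟩ | ⟨i, j, hij, ha, hb⟩ | ⟨i, hi, ha, hb⟩ |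
      ⟨j, hj, ha, hb⟩ | ⟨i, j, hij, ha, hb⟩ | ⟨j, hj, ha, hb⟩ <;>
    simp_all

lemma nbrs_hub1 (x) (h : (G).Adj (inl 1) x) :
    x = inl 0 ∨ (∃ i : Fin (ℓ₁ - 1), i.val = ℓ₁ - 2 ∧ x = inr (inl i)) ∨
      (∃ j : Fin (ℓ₂ - 1), j.val = ℓ₂ - 2 ∧ x = inr (inr j)) := by
  rw [thetaOneGraph, SimpleGraph.fromRel_adj] at h
  obtain ⟨hne, h | h⟩ := h <;>
    rcases h with ⟨ha, hb⟩ | ⟨i, hi, ha, hb⟩ | ⟨i, j, hij, ha, hb⟩ | ⟨i, hi, ha, hb⟩ |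
      ⟨j, hj, ha, hb⟩ | ⟨i, j, hij, ha, hb⟩ | ⟨j, hj, ha, hb⟩ <;>
    simp_all

lemma nbrs_u (i : Fin (ℓ₁ - 1)) (x) (h : (G).Adj (inr (inl i)) x) :
    (x = inl 0 ∧ i.val = 0) ∨ (x = inl 1 ∧ i.val = ℓ₁ - 2) ∨
      (∃ j : Fin (ℓ₁ - 1), x = inr (inl j) ∧ (j.val + 1 = i.val ∨ i.val + 1 = j.val)) := by
  rw [thetaOneGraph, SimpleGraph.fromRel_adj] at h
  obtain ⟨hne, h | h⟩ := h <;>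
    rcases h with ⟨ha, hb⟩ | ⟨i', hi, ha, hb⟩ | ⟨i', j, hij, ha, hb⟩ | ⟨i', hi, ha, hb⟩ |
      ⟨j, hj, ha, hb⟩ | ⟨i', j, hij, ha, hb⟩ | ⟨j, hj, ha, hb⟩ <;>
    simp_all

lemma nbrs_w (j : Fin (ℓ₂ - 1)) (x) (h : (G).Adj (inr (inr j)) x) :
    (x = inl 0 ∧ j.val = 0) ∨ (x = inl 1 ∧ j.val = ℓ₂ - 2) ∨
      (∃ k : Fin (ℓ₂ - 1), x = inr (inr k) ∧ (k.val + 1 = j.val ∨ j.val + 1 = k.val)) := by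
  rw [thetaOneGraph, SimpleGraph.fromRel_adj] at h
  obtain ⟨hne, h | h⟩ := h <;>
    rcases h with ⟨ha, hb⟩ | ⟨i', hi, ha, hb⟩ | ⟨i', k, hik, ha, hb⟩ | ⟨i', hi, ha, hb⟩ |
      ⟨k, hk, ha, hb⟩ | ⟨i', k, hik, ha, hb⟩ | ⟨k, hk, ha, hb⟩ <;>
    simp_all


lemma inru_ext {i j : Fin (ℓ₁ - 1)} (h : i.val = j.val) :
    (Sum.inr (Sum.inl i) : Fin 2 ⊕ (Fin (ℓ₁ - 1) ⊕ Fin (ℓ₂ - 1))) = Sum.inr (Sum.inl j) := by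
  rw [Fin.ext h]

lemma inrw_ext {i j : Fin (ℓ₂ - 1)} (h : i.val = j.val) :
    (Sum.inr (Sum.inr i) : Fin 2 ⊕ (Fin (ℓ₁ - 1) ⊕ Fin (ℓ₂ - 1))) = Sum.inr (Sum.inr j) := by
  rw [Fin.ext h]

end ThetaAux

/-- Let `ℓ₁, ℓ₂ ≥ 4` with `ℓ₁ ≡ 1 (mod 3)` and `ℓ₂ ≡ 1 (mod 3)`. Then the theta
graph `Θ_{1,ℓ₁,ℓ₂}` is not proper conflict-free (degree+1)-choosable: there is a
list assignment `L` with `|L(v)| ≥ d(v) + 1` for every vertex `v` admitting no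
proper conflict-free `L`-coloring. -/
theorem thetaOneGraph_not_pcf_degree_plus_one_choosable
    (ℓ₁ ℓ₂ : ℕ) (h₁ : 4 ≤ ℓ₁) (h₂ : 4 ≤ ℓ₂)
    (hm₁ : ℓ₁ % 3 = 1) (hm₂ : ℓ₂ % 3 = 1) :
    ∃ L : Fin 2 ⊕ (Fin (ℓ₁ - 1) ⊕ Fin (ℓ₂ - 1)) → Finset ℕ,
      (∀ v, ((thetaOneGraph ℓ₁ ℓ₂).neighborSet v).ncard + 1 ≤ (L v).card) ∧
      ¬ ∃ φ, IsPCFColoring (thetaOneGraph ℓ₁ ℓ₂) φ ∧ ∀ v, φ v ∈ L v := by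
  classical
  open Sum ThetaAux in
  refine ⟨Sum.elim (fun _ => ({1, 2, 3, 4} : Finset ℕ)) (fun _ => ({1, 2, 3} : Finset ℕ)),
    ?_, ?_⟩
  · -- degree bounds
    rintro (f | i | j)
    · have hflt := f.isLt
      have hf : f.val = 0 ∨ f.val = 1 := by omega
      rcases hf with hf | hf
      · rw [show f = 0 from Fin.ext (by simpa using hf)]
        -- hub inl 0
        have hc : ({1, 2, 3, 4} : Finset ℕ).card = 4 := by decide
        simp only [Sum.elim_inl, hc]
        have hb : ((thetaOneGraph ℓ₁ ℓ₂).neighborSet (Sum.inl 0)).ncard ≤ 3 := by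
          apply ncard_le_three' _ (Sum.inl 1) (Sum.inr (Sum.inl ⟨0, by omega⟩))
            (Sum.inr (Sum.inr ⟨0, by omega⟩))
          intro x hx
          rw [SimpleGraph.mem_neighborSet] at hx
          simp only [Set.mem_insert_iff, Set.mem_singleton_iff]
          rcases nbrs_hub0 x hx with rfl | ⟨i, hi, rfl⟩ | ⟨j, hj, rfl⟩
          · exact Or.inl rfl
          · exact Or.inr (Or.inl (by rw [Fin.ext (a := i) (b := ⟨0, by omega⟩) hi]))
          · exact Or.inr (Or.inr (by rw [Fin.ext (a := j) (b := ⟨0, by omega⟩) hj]))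
        omega
      · rw [show f = 1 from Fin.ext (by simpa using hf)]
        -- hub inl 1
        have hc : ({1, 2, 3, 4} : Finset ℕ).card = 4 := by decide
        simp only [Sum.elim_inl, hc]
        have hb : ((thetaOneGraph ℓ₁ ℓ₂).neighborSet (Sum.inl 1)).ncard ≤ 3 := by
          apply ncard_le_three' _ (Sum.inl 0) (Sum.inr (Sum.inl ⟨ℓ₁ - 2, by omega⟩))
            (Sum.inr (Sum.inr ⟨ℓ₂ - 2, by omega⟩))
          intro x hx
          rw [SimpleGraph.mem_neighborSet] at hx
          simp only [Set.mem_insert_iff, Set.mem_singleton_iff]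
          rcases nbrs_hub1 x hx with rfl | ⟨i, hi, rfl⟩ | ⟨j, hj, rfl⟩
          · exact Or.inl rfl
          · exact Or.inr (Or.inl (by rw [Fin.ext (a := i) (b := ⟨ℓ₁ - 2, by omega⟩) hi]))
          · exact Or.inr (Or.inr (by rw [Fin.ext (a := j) (b := ⟨ℓ₂ - 2, by omega⟩) hj]))
        omega
    · -- internal u path
      have hc : ({1, 2, 3} : Finset ℕ).card = 3 := by decide
      simp only [Sum.elim_inr, hc]
      have hilt := i.isLt
      have hb : ((thetaOneGraph ℓ₁ ℓ₂).neighborSet (Sum.inr (Sum.inl i))).ncard ≤ 2 := by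
        by_cases hi0 : i.val = 0
        · apply ncard_le_two' _ (Sum.inl 0) (Sum.inr (Sum.inl ⟨1, by omega⟩))
          intro x hx
          rw [SimpleGraph.mem_neighborSet] at hx
          simp only [Set.mem_insert_iff, Set.mem_singleton_iff]
          rcases nbrs_u i x hx with ⟨rfl, _⟩ | ⟨rfl, h⟩ | ⟨j, rfl, hj | hj⟩
          · exact Or.inl rfl
          · omega
          · omega
          · exact Or.inr (by rw [Fin.ext (a := j) (b := ⟨1, by omega⟩) (show _ = 1 by omega)])
        · by_cases hil : i.val = ℓ₁ - 2
          · apply ncard_le_two' _ (Sum.inl 1) (Sum.inr (Sum.inl ⟨ℓ₁ - 3, by omega⟩))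
            intro x hx
            rw [SimpleGraph.mem_neighborSet] at hx
            simp only [Set.mem_insert_iff, Set.mem_singleton_iff]
            rcases nbrs_u i x hx with ⟨rfl, h⟩ | ⟨rfl, _⟩ | ⟨j, rfl, hj | hj⟩
            · omega
            · exact Or.inl rfl
            · exact Or.inr (by rw [Fin.ext (a := j) (b := ⟨ℓ₁ - 3, by omega⟩) (show _ = ℓ₁ - 3 by omega)])
            · have := j.isLt; omega
          · apply ncard_le_two' _ (Sum.inr (Sum.inl ⟨i.val - 1, by omega⟩))
              (Sum.inr (Sum.inl ⟨i.val + 1, by omega⟩))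
            intro x hx
            rw [SimpleGraph.mem_neighborSet] at hx
            simp only [Set.mem_insert_iff, Set.mem_singleton_iff]
            rcases nbrs_u i x hx with ⟨rfl, h⟩ | ⟨rfl, h⟩ | ⟨j, rfl, hj | hj⟩
            · omega
            · omega
            · exact Or.inl (by rw [Fin.ext (a := j) (b := ⟨i.val - 1, by omega⟩) (show _ = i.val - 1 by omega)])
            · exact Or.inr (by rw [Fin.ext (a := j) (b := ⟨i.val + 1, by omega⟩) (show _ = i.val + 1 by omega)])
      omega
    · -- internal w path
      have hc : ({1, 2, 3} : Finset ℕ).card = 3 := by decide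
      simp only [Sum.elim_inr, hc]
      have hjlt := j.isLt
      have hb : ((thetaOneGraph ℓ₁ ℓ₂).neighborSet (Sum.inr (Sum.inr j))).ncard ≤ 2 := by
        by_cases hj0 : j.val = 0
        · apply ncard_le_two' _ (Sum.inl 0) (Sum.inr (Sum.inr ⟨1, by omega⟩))
          intro x hx
          rw [SimpleGraph.mem_neighborSet] at hx
          simp only [Set.mem_insert_iff, Set.mem_singleton_iff]
          rcases nbrs_w j x hx with ⟨rfl, _⟩ | ⟨rfl, h⟩ | ⟨k, rfl, hk | hk⟩
          · exact Or.inl rfl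
          · omega
          · omega
          · exact Or.inr (by rw [Fin.ext (a := k) (b := ⟨1, by omega⟩) (show _ = 1 by omega)])
        · by_cases hjl : j.val = ℓ₂ - 2
          · apply ncard_le_two' _ (Sum.inl 1) (Sum.inr (Sum.inr ⟨ℓ₂ - 3, by omega⟩))
            intro x hx
            rw [SimpleGraph.mem_neighborSet] at hx
            simp only [Set.mem_insert_iff, Set.mem_singleton_iff]
            rcases nbrs_w j x hx with ⟨rfl, h⟩ | ⟨rfl, _⟩ | ⟨k, rfl, hk | hk⟩
            · omega
            · exact Or.inl rfl
            · exact Or.inr (by rw [Fin.ext (a := k) (b := ⟨ℓ₂ - 3, by omega⟩) (show _ = ℓ₂ - 3 by omega)])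
            · have := k.isLt; omega
          · apply ncard_le_two' _ (Sum.inr (Sum.inr ⟨j.val - 1, by omega⟩))
              (Sum.inr (Sum.inr ⟨j.val + 1, by omega⟩))
            intro x hx
            rw [SimpleGraph.mem_neighborSet] at hx
            simp only [Set.mem_insert_iff, Set.mem_singleton_iff]
            rcases nbrs_w j x hx with ⟨rfl, h⟩ | ⟨rfl, h⟩ | ⟨k, rfl, hk | hk⟩
            · omega
            · omega
            · exact Or.inl (by rw [Fin.ext (a := k) (b := ⟨j.val - 1, by omega⟩) (show _ = j.val - 1 by omega)])
            · exact Or.inr (by rw [Fin.ext (a := k) (b := ⟨j.val + 1, by omega⟩) (show _ = j.val + 1 by omega)])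
      omega
  · rintro ⟨φ, hφ, hL⟩
    have hL' : ∀ x : Fin (ℓ₁ - 1) ⊕ Fin (ℓ₂ - 1),
        φ (Sum.inr x) = 1 ∨ φ (Sum.inr x) = 2 ∨ φ (Sum.inr x) = 3 := by
      intro x
      have := hL (Sum.inr x)
      simpa using this
    obtain ⟨a, ha_def⟩ : ∃ a : ℕ → ℕ, ∀ k (h : k < ℓ₁ - 1),
        a k = φ (Sum.inr (Sum.inl ⟨k, h⟩)) :=
      ⟨fun k => if h : k < ℓ₁ - 1 then φ (Sum.inr (Sum.inl ⟨k, h⟩)) else 0,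
        fun k h => dif_pos h⟩
    obtain ⟨b, hb_def⟩ : ∃ b : ℕ → ℕ, ∀ k (h : k < ℓ₂ - 1),
        b k = φ (Sum.inr (Sum.inr ⟨k, h⟩)) :=
      ⟨fun k => if h : k < ℓ₂ - 1 then φ (Sum.inr (Sum.inr ⟨k, h⟩)) else 0,
        fun k h => dif_pos h⟩
    have P3a : ∀ k, k < ℓ₁ - 1 → a k = 1 ∨ a k = 2 ∨ a k = 3 := by
      intro k h; rw [ha_def k h]; exact hL' _
    have P3b : ∀ k, k < ℓ₂ - 1 → b k = 1 ∨ b k = 2 ∨ b k = 3 := by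
      intro k h; rw [hb_def k h]; exact hL' _
    have P1a : ∀ k, k + 1 < ℓ₁ - 1 → a k ≠ a (k + 1) := by
      intro k h
      rw [ha_def k (by omega), ha_def (k + 1) h]
      exact hφ.1 (adj_uu ⟨k, by omega⟩ ⟨k + 1, h⟩ rfl)
    have P1b : ∀ k, k + 1 < ℓ₂ - 1 → b k ≠ b (k + 1) := by
      intro k h
      rw [hb_def k (by omega), hb_def (k + 1) h]
      exact hφ.1 (adj_ww ⟨k, by omega⟩ ⟨k + 1, h⟩ rfl)
    have P2a : ∀ k, k + 2 < ℓ₁ - 1 → a k ≠ a (k + 2) := by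
      intro k h
      rw [ha_def k (by omega), ha_def (k + 2) h]
      refine cf_two hφ (v := Sum.inr (Sum.inl ⟨k + 1, by omega⟩))
        ((adj_uu ⟨k, by omega⟩ ⟨k + 1, by omega⟩ rfl).symm)
        (adj_uu ⟨k + 1, by omega⟩ ⟨k + 2, by omega⟩ rfl)
        (by simp only [ne_eq, Sum.inr.injEq, Sum.inl.injEq, Fin.ext_iff]; omega) ?_
      intro w hw
      rcases nbrs_u _ w hw with ⟨rfl, h0⟩ | ⟨rfl, h0⟩ | ⟨j, rfl, hj | hj⟩
      · have h0' : k + 1 = 0 := h0; omega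
      · have h0' : k + 1 = ℓ₁ - 2 := h0; omega
      · left; exact inru_ext (show j.val = k by have : j.val + 1 = k + 1 := hj; omega)
      · right; exact inru_ext (show j.val = k + 2 by have : k + 1 + 1 = j.val := hj; omega)
    have P2b : ∀ k, k + 2 < ℓ₂ - 1 → b k ≠ b (k + 2) := by
      intro k h
      rw [hb_def k (by omega), hb_def (k + 2) h]
      refine cf_two hφ (v := Sum.inr (Sum.inr ⟨k + 1, by omega⟩))
        ((adj_ww ⟨k, by omega⟩ ⟨k + 1, by omega⟩ rfl).symm)
        (adj_ww ⟨k + 1, by omega⟩ ⟨k + 2, by omega⟩ rfl)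
        (by simp only [ne_eq, Sum.inr.injEq, Fin.ext_iff]; omega) ?_
      intro w hw
      rcases nbrs_w _ w hw with ⟨rfl, h0⟩ | ⟨rfl, h0⟩ | ⟨j, rfl, hj | hj⟩
      · have h0' : k + 1 = 0 := h0; omega
      · have h0' : k + 1 = ℓ₂ - 2 := h0; omega
      · left; exact inrw_ext (show j.val = k by have : j.val + 1 = k + 1 := hj; omega)
      · right; exact inrw_ext (show j.val = k + 2 by have : k + 1 + 1 = j.val := hj; omega)
    have E1a : φ (Sum.inl 0) ≠ a 0 := by
      rw [ha_def 0 (by omega)]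
      exact hφ.1 (adj_u0 ⟨0, by omega⟩ rfl)
    have E1b : φ (Sum.inl 0) ≠ b 0 := by
      rw [hb_def 0 (by omega)]
      exact hφ.1 (adj_w0 ⟨0, by omega⟩ rfl)
    have E2a : φ (Sum.inl 0) ≠ a 1 := by
      rw [ha_def 1 (by omega)]
      refine cf_two hφ (v := Sum.inr (Sum.inl ⟨0, by omega⟩))
        ((adj_u0 ⟨0, by omega⟩ rfl).symm)
        (adj_uu ⟨0, by omega⟩ ⟨1, by omega⟩ rfl)
        (by simp) ?_
      intro w hw
      rcases nbrs_u _ w hw with ⟨rfl, h0⟩ | ⟨rfl, h0⟩ | ⟨j, rfl, hj | hj⟩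
      · left; rfl
      · have h0' : (0 : ℕ) = ℓ₁ - 2 := h0; omega
      · have hj' : j.val + 1 = 0 := hj; omega
      · right; exact inru_ext (show j.val = 1 by have : 0 + 1 = j.val := hj; omega)
    have E2b : φ (Sum.inl 0) ≠ b 1 := by
      rw [hb_def 1 (by omega)]
      refine cf_two hφ (v := Sum.inr (Sum.inr ⟨0, by omega⟩))
        ((adj_w0 ⟨0, by omega⟩ rfl).symm)
        (adj_ww ⟨0, by omega⟩ ⟨1, by omega⟩ rfl)
        (by simp) ?_
      intro w hw
      rcases nbrs_w _ w hw with ⟨rfl, h0⟩ | ⟨rfl, h0⟩ | ⟨j, rfl, hj | hj⟩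
      · left; rfl
      · have h0' : (0 : ℕ) = ℓ₂ - 2 := h0; omega
      · have hj' : j.val + 1 = 0 := hj; omega
      · right; exact inrw_ext (show j.val = 1 by have : 0 + 1 = j.val := hj; omega)
    have E3a : φ (Sum.inl 1) ≠ a (ℓ₁ - 2) := by
      rw [ha_def (ℓ₁ - 2) (by omega)]
      exact hφ.1 ((adj_ul ⟨ℓ₁ - 2, by omega⟩ rfl).symm)
    have E3b : φ (Sum.inl 1) ≠ b (ℓ₂ - 2) := by
      rw [hb_def (ℓ₂ - 2) (by omega)]
      exact hφ.1 ((adj_wl ⟨ℓ₂ - 2, by omega⟩ rfl).symm)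
    have E4a : φ (Sum.inl 1) ≠ a (ℓ₁ - 3) := by
      rw [ha_def (ℓ₁ - 3) (by omega)]
      refine cf_two hφ (v := Sum.inr (Sum.inl ⟨ℓ₁ - 2, by omega⟩))
        (adj_ul ⟨ℓ₁ - 2, by omega⟩ rfl)
        ((adj_uu ⟨ℓ₁ - 3, by omega⟩ ⟨ℓ₁ - 2, by omega⟩ (show ℓ₁ - 2 = ℓ₁ - 3 + 1 by omega)).symm)
        (by simp) ?_
      intro w hw
      rcases nbrs_u _ w hw with ⟨rfl, h0⟩ | ⟨rfl, h0⟩ | ⟨j, rfl, hj | hj⟩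
      · have h0' : ℓ₁ - 2 = 0 := h0; omega
      · left; rfl
      · right; exact inru_ext (show j.val = ℓ₁ - 3 by have : j.val + 1 = ℓ₁ - 2 := hj; omega)
      · have hj' : ℓ₁ - 2 + 1 = j.val := hj; have := j.isLt; omega
    have E4b : φ (Sum.inl 1) ≠ b (ℓ₂ - 3) := by
      rw [hb_def (ℓ₂ - 3) (by omega)]
      refine cf_two hφ (v := Sum.inr (Sum.inr ⟨ℓ₂ - 2, by omega⟩))
        (adj_wl ⟨ℓ₂ - 2, by omega⟩ rfl)
        ((adj_ww ⟨ℓ₂ - 3, by omega⟩ ⟨ℓ₂ - 2, by omega⟩ (show ℓ₂ - 2 = ℓ₂ - 3 + 1 by omega)).symm)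
        (by simp) ?_
      intro w hw
      rcases nbrs_w _ w hw with ⟨rfl, h0⟩ | ⟨rfl, h0⟩ | ⟨j, rfl, hj | hj⟩
      · have h0' : ℓ₂ - 2 = 0 := h0; omega
      · left; rfl
      · right; exact inrw_ext (show j.val = ℓ₂ - 3 by have : j.val + 1 = ℓ₂ - 2 := hj; omega)
      · have hj' : ℓ₂ - 2 + 1 = j.val := hj; have := j.isLt; omega
    have pera := period_lemma (ℓ₁ - 1) a P1a P2a P3a
    have perb := period_lemma (ℓ₂ - 1) b P1b P2b P3b
    have hA2 : a (ℓ₁ - 2) = a 2 := by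
      rw [pera (ℓ₁ - 2) (by omega)]; congr 1; omega
    have hA1 : a (ℓ₁ - 3) = a 1 := by
      rw [pera (ℓ₁ - 3) (by omega)]; congr 1; omega
    have hB2 : b (ℓ₂ - 2) = b 2 := by
      rw [perb (ℓ₂ - 2) (by omega)]; congr 1; omega
    have hB1 : b (ℓ₂ - 3) = b 1 := by
      rw [perb (ℓ₂ - 3) (by omega)]; congr 1; omega
    rw [hA2] at E3a; rw [hA1] at E4a; rw [hB2] at E3b; rw [hB1] at E4b
    have dA01 : a 0 ≠ a 1 := P1a 0 (by omega)
    have dA12 : a 1 ≠ a 2 := P1a 1 (by omega)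
    have dA02 : a 0 ≠ a 2 := P2a 0 (by omega)
    have dB01 : b 0 ≠ b 1 := P1b 0 (by omega)
    have dB12 : b 1 ≠ b 2 := P1b 1 (by omega)
    have dB02 : b 0 ≠ b 2 := P2b 0 (by omega)
    have mA0 := P3a 0 (by omega); have mA1 := P3a 1 (by omega); have mA2 := P3a 2 (by omega)
    have mB0 := P3b 0 (by omega); have mB1 := P3b 1 (by omega); have mB2 := P3b 2 (by omega)
    have hub0 : φ (Sum.inl 0) = 1 ∨ φ (Sum.inl 0) = 2 ∨ φ (Sum.inl 0) = 3 ∨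
        φ (Sum.inl 0) = 4 := by
      have := hL (Sum.inl 0); simpa using this
    have hub1 : φ (Sum.inl 1) = 1 ∨ φ (Sum.inl 1) = 2 ∨ φ (Sum.inl 1) = 3 ∨
        φ (Sum.inl 1) = 4 := by
      have := hL (Sum.inl 1); simpa using this
    have hne01 : φ (Sum.inl 0) ≠ φ (Sum.inl 1) := hφ.1 adj_hub
    by_cases h4 : φ (Sum.inl 1) = 4
    · -- φ(v₁) = a 2 = b 2, all three neighbors of v₂ get color φ(v₁)
      have hA : φ (Sum.inl 0) = a 2 := by
        clear * - hub0 hne01 h4 E1a E2a dA01 dA12 dA02 mA0 mA1 mA2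
        omega
      have hB : φ (Sum.inl 0) = b 2 := by
        clear * - hub0 hne01 h4 E1b E2b dB01 dB12 dB02 mB0 mB1 mB2
        omega
      refine cf_three hφ (v := Sum.inl 1) (x := Sum.inl 0)
        (y := Sum.inr (Sum.inl ⟨ℓ₁ - 2, by omega⟩))
        (z := Sum.inr (Sum.inr ⟨ℓ₂ - 2, by omega⟩))
        adj_hub.symm
        ((adj_ul ⟨ℓ₁ - 2, by omega⟩ rfl).symm)
        ((adj_wl ⟨ℓ₂ - 2, by omega⟩ rfl).symm)
        (by simp) (by simp) ?_ ?_ ?_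
      · intro w hw
        rcases nbrs_hub1 w hw with rfl | ⟨i, hi, rfl⟩ | ⟨j, hj, rfl⟩
        · exact Or.inl rfl
        · exact Or.inr (Or.inl (inru_ext hi))
        · exact Or.inr (Or.inr (inrw_ext hj))
      · rw [← ha_def (ℓ₁ - 2) (by omega), hA2]; exact hA
      · rw [← hb_def (ℓ₂ - 2) (by omega), hB2]; exact hB
    · -- φ(v₂) = a 0 = b 0, all three neighbors of v₁ get color φ(v₂)
      have hA : φ (Sum.inl 1) = a 0 := by
        clear * - hub1 h4 E3a E4a dA01 dA12 dA02 mA0 mA1 mA2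
        omega
      have hB : φ (Sum.inl 1) = b 0 := by
        clear * - hub1 h4 E3b E4b dB01 dB12 dB02 mB0 mB1 mB2
        omega
      refine cf_three hφ (v := Sum.inl 0) (x := Sum.inl 1)
        (y := Sum.inr (Sum.inl ⟨0, by omega⟩))
        (z := Sum.inr (Sum.inr ⟨0, by omega⟩))
        adj_hub
        (adj_u0 ⟨0, by omega⟩ rfl)
        (adj_w0 ⟨0, by omega⟩ rfl)
        (by simp) (by simp) ?_ ?_ ?_
      · intro w hw
        rcases nbrs_hub0 w hw with rfl | ⟨i, hi, rfl⟩ | ⟨j, hj, rfl⟩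
        · exact Or.inl rfl
        · exact Or.inr (Or.inl (inru_ext hi))
        · exact Or.inr (Or.inr (inrw_ext hj))
      · rw [← ha_def 0 (by omega)]; exact hA
      · rw [← hb_def 0 (by omega)]; exact hB
end
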